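/- arXiv:1907.03597 — 6 statements merged into one kernel-verified Lean document; each statement's English description precedes it below -/
import Mathlib

section
/- For the curve σ(s) = Φ(u(s),v(s)) on the patch Φ, one has the decomposition σ'' = (u'' + Γ¹₁₁u'² + 2Γ¹₁₂u'v' + Γ¹₂₂v'²)Φ_u + (v'' + Γ²₁₁u'² + 2Γ²₁₂u'v' + Γ²₂₂v'²)Φ_v + (L u'² + 2M u'v' + N v'²)𝐍, where all quantities attached to Φ are evaluated at (u(s),v(s)). -/
noncomputable section
open Matrix

/-- Partial derivative in the first (`u`) direction. -/
def pu {E : Type*} [NormedAddCommGroup E] [NormedSpace ℝ E] (f : ℝ × ℝ → E) (p : ℝ × ℝ) : E :=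
  fderiv ℝ f p (1, 0)

/-- Partial derivative in the second (`v`) direction. -/
def pv {E : Type*} [NormedAddCommGroup E] [NormedSpace ℝ E] (f : ℝ × ℝ → E) (p : ℝ × ℝ) : E :=
  fderiv ℝ f p (0, 1)

/-- Euclidean norm on `Fin 3 → ℝ`. -/
def enorm3 (x : Fin 3 → ℝ) : ℝ := Real.sqrt (x ⬝ᵥ x)

section Aux

variable {Em : Type*} [NormedAddCommGroup Em] [NormedSpace ℝ Em]

lemma contDiff_pu {f : ℝ × ℝ → Em} (hf : ContDiff ℝ (⊤ : ℕ∞) f) : ContDiff ℝ (⊤ : ℕ∞) (pu f) :=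
  (hf.fderiv_right (by simp)).clm_apply contDiff_const

lemma contDiff_pv {f : ℝ × ℝ → Em} (hf : ContDiff ℝ (⊤ : ℕ∞) f) : ContDiff ℝ (⊤ : ℕ∞) (pv f) :=
  (hf.fderiv_right (by simp)).clm_apply contDiff_const

lemma clairaut {f : ℝ × ℝ → Em} (hf : ContDiff ℝ (⊤ : ℕ∞) f) (p : ℝ × ℝ) :
    pu (pv f) p = pv (pu f) p := by
  have hd : Differentiable ℝ (fderiv ℝ f) := (hf.fderiv_right (m := 1) (WithTop.coe_le_coe.mpr le_top)).differentiable one_ne_zero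
  have h1 : pu (pv f) p = fderiv ℝ (fderiv ℝ f) p (1,0) (0,1) := by
    unfold pu pv
    rw [fderiv_clm_apply (hd p) (differentiableAt_const _)]
    simp
  have h2 : pv (pu f) p = fderiv ℝ (fderiv ℝ f) p (0,1) (1,0) := by
    unfold pu pv
    rw [fderiv_clm_apply (hd p) (differentiableAt_const _)]
    simp
  rw [h1, h2, (hf.contDiffAt.isSymmSndFDerivAt (by simp only [minSmoothness_of_isRCLikeNormedField]; rw [← WithTop.coe_ofNat]; exact WithTop.coe_le_coe.mpr le_top)) _ _]

lemma hasFDerivAt_comp_proj {f : ℝ × ℝ → Fin 3 → ℝ} {p : ℝ × ℝ}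
    (hf : DifferentiableAt ℝ f p) (i : Fin 3) :
    HasFDerivAt (fun q => f q i) ((ContinuousLinearMap.proj i).comp (fderiv ℝ f p)) p :=
  ((ContinuousLinearMap.proj i).hasFDerivAt.comp p hf.hasFDerivAt :
    HasFDerivAt ((ContinuousLinearMap.proj (R := ℝ) (φ := fun _ : Fin 3 => ℝ) i) ∘ f) _ p)

lemma hasFDerivAt_dot {f g : ℝ × ℝ → Fin 3 → ℝ} {p : ℝ × ℝ}
    (hf : DifferentiableAt ℝ f p) (hg : DifferentiableAt ℝ g p) :
    HasFDerivAt (fun q => f q ⬝ᵥ g q)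
      (∑ i : Fin 3, (f p i • ((ContinuousLinearMap.proj i).comp (fderiv ℝ g p))
        + g p i • ((ContinuousLinearMap.proj i).comp (fderiv ℝ f p)))) p := by
  simp only [dotProduct]
  exact HasFDerivAt.fun_sum fun i _ => (hasFDerivAt_comp_proj hf i).mul (hasFDerivAt_comp_proj hg i)

lemma pu_dot {f g : ℝ × ℝ → Fin 3 → ℝ} (hf : Differentiable ℝ f) (hg : Differentiable ℝ g)
    (p : ℝ × ℝ) :
    pu (fun q => f q ⬝ᵥ g q) p = pu f p ⬝ᵥ g p + f p ⬝ᵥ pu g p := by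
  have h := (hasFDerivAt_dot (hf p) (hg p)).fderiv
  unfold pu
  rw [h]
  simp [dotProduct, Fin.sum_univ_three]
  ring

lemma pv_dot {f g : ℝ × ℝ → Fin 3 → ℝ} (hf : Differentiable ℝ f) (hg : Differentiable ℝ g)
    (p : ℝ × ℝ) :
    pv (fun q => f q ⬝ᵥ g q) p = pv f p ⬝ᵥ g p + f p ⬝ᵥ pv g p := by
  have h := (hasFDerivAt_dot (hf p) (hg p)).fderiv
  unfold pv
  rw [h]
  simp [dotProduct, Fin.sum_univ_three]
  ring

lemma hasDerivAt_comp2 {f : ℝ × ℝ → Em} (hf : Differentiable ℝ f)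
    {u v : ℝ → ℝ} (hu : Differentiable ℝ u) (hv : Differentiable ℝ v) (s : ℝ) :
    HasDerivAt (fun t => f (u t, v t))
      (deriv u s • pu f (u s, v s) + deriv v s • pv f (u s, v s)) s := by
  have hc : HasDerivAt (fun t => (u t, v t)) (deriv u s, deriv v s) s :=
    ((hu s).hasDerivAt).prodMk ((hv s).hasDerivAt)
  have h := (hf (u s, v s)).hasFDerivAt.comp_hasDerivAt s hc
  convert h using 1
  · rfl
  have he : (deriv u s, deriv v s) = deriv u s • ((1:ℝ), (0:ℝ)) + deriv v s • ((0:ℝ), (1:ℝ)) := by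
    simp [Prod.ext_iff]
  rw [he, map_add, _root_.map_smul, _root_.map_smul]
  rfl

lemma contDiff_deriv {u : ℝ → ℝ} (hu : ContDiff ℝ (⊤ : ℕ∞) u) : ContDiff ℝ (⊤ : ℕ∞) (deriv u) := by
  have h2 := ((hu.fderiv_right (m := (⊤ : ℕ∞)) (by simp)).clm_apply (contDiff_const (c := (1:ℝ))) : ContDiff ℝ (⊤ : ℕ∞) fun t => fderiv ℝ u t 1)
  have hfun : deriv u = fun t => fderiv ℝ u t 1 := funext fun t => (fderiv_apply_one_eq_deriv).symm
  rw [hfun]; exact h2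

lemma perp3 {x y w : Fin 3 → ℝ} (h : crossProduct x y ≠ 0)
    (h1 : w ⬝ᵥ x = 0) (h2 : w ⬝ᵥ y = 0) (h3 : w ⬝ᵥ crossProduct x y = 0) : w = 0 := by
  have hne : crossProduct x y ⬝ᵥ crossProduct x y ≠ 0 :=
    fun hz => h ((dotProduct_self_eq_zero).mp hz)
  simp only [crossProduct, LinearMap.mk₂_apply, dotProduct, Fin.sum_univ_three,
    Matrix.cons_val_zero, Matrix.cons_val_one, Matrix.head_cons,
    Matrix.cons_val_two, Matrix.tail_cons] at h1 h2 h3 hne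
  have e0 : w 1 * (x 0 * y 1 - x 1 * y 0) - w 2 * (x 2 * y 0 - x 0 * y 2) = 0 := by
    linear_combination x 0 * h2 - y 0 * h1
  have e1 : w 2 * (x 1 * y 2 - x 2 * y 1) - w 0 * (x 0 * y 1 - x 1 * y 0) = 0 := by
    linear_combination x 1 * h2 - y 1 * h1
  have e2 : w 0 * (x 2 * y 0 - x 0 * y 2) - w 1 * (x 1 * y 2 - x 2 * y 1) = 0 := by
    linear_combination x 2 * h2 - y 2 * h1
  set c0 := x 1 * y 2 - x 2 * y 1
  set c1 := x 2 * y 0 - x 0 * y 2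
  set c2 := x 0 * y 1 - x 1 * y 0
  have key : (w 0 ^ 2 + w 1 ^ 2 + w 2 ^ 2) * (c0 * c0 + c1 * c1 + c2 * c2) = 0 := by
    linear_combination (w 0 * c0 + w 1 * c1 + w 2 * c2) * h3 + (w 1 * c2 - w 2 * c1) * e0
      + (w 2 * c0 - w 0 * c2) * e1 + (w 0 * c1 - w 1 * c0) * e2
  have hcne : c0 * c0 + c1 * c1 + c2 * c2 ≠ 0 := by
    intro hz; apply hne; linear_combination hz
  have hw : w 0 ^ 2 + w 1 ^ 2 + w 2 ^ 2 = 0 := by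
    rcases mul_eq_zero.mp key with h' | h'
    · exact h'
    · exact absurd h' hcne
  have z0 : w 0 = 0 := by nlinarith [sq_nonneg (w 0), sq_nonneg (w 1), sq_nonneg (w 2)]
  have z1 : w 1 = 0 := by nlinarith [sq_nonneg (w 0), sq_nonneg (w 1), sq_nonneg (w 2)]
  have z2 : w 2 = 0 := by nlinarith [sq_nonneg (w 0), sq_nonneg (w 1), sq_nonneg (w 2)]
  funext i
  fin_cases i <;> simp [z0, z1, z2]

lemma decomp3 {x y z : Fin 3 → ℝ} (h : crossProduct x y ≠ 0) {a b : ℝ}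
    (h1 : z ⬝ᵥ x = a * (x ⬝ᵥ x) + b * (x ⬝ᵥ y))
    (h2 : z ⬝ᵥ y = a * (x ⬝ᵥ y) + b * (y ⬝ᵥ y)) :
    z = a • x + b • y +
      (z ⬝ᵥ ((enorm3 (crossProduct x y))⁻¹ • crossProduct x y)) •
        ((enorm3 (crossProduct x y))⁻¹ • crossProduct x y) := by
  set c := crossProduct x y with hc
  have hcc : 0 < c ⬝ᵥ c := by
    rcases lt_or_eq_of_le (Finset.sum_nonneg fun i _ => mul_self_nonneg (c i) :
        (0:ℝ) ≤ c ⬝ᵥ c) with h' | h'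
    · exact h'
    · exact absurd ((dotProduct_self_eq_zero).mp h'.symm) h
  have hk : (enorm3 c)⁻¹ * (enorm3 c)⁻¹ * (c ⬝ᵥ c) = 1 := by
    unfold enorm3
    rw [← mul_inv, Real.mul_self_sqrt hcc.le]
    exact inv_mul_cancel₀ hcc.ne'
  have hcx : c ⬝ᵥ x = 0 := by rw [dotProduct_comm]; exact dot_self_cross x y
  have hcy : c ⬝ᵥ y = 0 := by rw [dotProduct_comm]; exact dot_cross_self x y
  rw [← sub_eq_zero]
  apply perp3 h
  · simp only [sub_dotProduct, add_dotProduct, smul_dotProduct,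
      smul_eq_mul, hcx, h1, dotProduct_comm y x]
    ring
  · simp only [sub_dotProduct, add_dotProduct, smul_dotProduct,
      smul_eq_mul, hcy, h2, dotProduct_comm y x]
    ring
  · have hxc : x ⬝ᵥ c = 0 := by rw [hc]; exact dot_self_cross x y
    have hyc : y ⬝ᵥ c = 0 := by rw [hc]; exact dot_cross_self x y
    rw [← hc]
    simp only [sub_dotProduct, add_dotProduct, smul_dotProduct,
      dotProduct_smul, smul_eq_mul, hcx, hcy, hxc, hyc]
    linear_combination (-(z ⬝ᵥ c)) * hk

end Aux

theorem second_derivative_gauss_decomposition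
    (Φ : ℝ × ℝ → Fin 3 → ℝ) (hΦ : ContDiff ℝ (⊤ : ℕ∞) Φ)
    (hreg : ∀ p, crossProduct (pu Φ p) (pv Φ p) ≠ 0)
    (E F G : ℝ × ℝ → ℝ)
    (hE : ∀ p, E p = pu Φ p ⬝ᵥ pu Φ p) (hF : ∀ p, F p = pu Φ p ⬝ᵥ pv Φ p)
    (hG : ∀ p, G p = pv Φ p ⬝ᵥ pv Φ p)
    (NN : ℝ × ℝ → Fin 3 → ℝ)
    (hNN : ∀ p, NN p =
      (enorm3 (crossProduct (pu Φ p) (pv Φ p)))⁻¹ • crossProduct (pu Φ p) (pv Φ p))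
    (Lc Mc Nc : ℝ × ℝ → ℝ)
    (hLc : ∀ p, Lc p = pu (pu Φ) p ⬝ᵥ NN p) (hMc : ∀ p, Mc p = pv (pu Φ) p ⬝ᵥ NN p)
    (hNc : ∀ p, Nc p = pv (pv Φ) p ⬝ᵥ NN p)
    (hW : ∀ p, 0 < E p * G p - F p ^ 2)
    (Γ111 Γ211 Γ112 Γ212 Γ122 Γ222 : ℝ × ℝ → ℝ)
    (hΓ111 : ∀ p, Γ111 p =
      (G p * pu E p - 2 * F p * pu F p + F p * pv E p) / (2 * (E p * G p - F p ^ 2)))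
    (hΓ211 : ∀ p, Γ211 p =
      (2 * E p * pu F p - E p * pv E p - F p * pu E p) / (2 * (E p * G p - F p ^ 2)))
    (hΓ112 : ∀ p, Γ112 p =
      (G p * pv E p - F p * pu G p) / (2 * (E p * G p - F p ^ 2)))
    (hΓ212 : ∀ p, Γ212 p =
      (E p * pu G p - F p * pv E p) / (2 * (E p * G p - F p ^ 2)))
    (hΓ122 : ∀ p, Γ122 p =
      (2 * G p * pv F p - G p * pu G p - F p * pv G p) / (2 * (E p * G p - F p ^ 2)))
    (hΓ222 : ∀ p, Γ222 p =
      (E p * pv G p - 2 * F p * pv F p + F p * pu G p) / (2 * (E p * G p - F p ^ 2)))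
    (u v : ℝ → ℝ) (hu : ContDiff ℝ (⊤ : ℕ∞) u) (hv : ContDiff ℝ (⊤ : ℕ∞) v)
    (σ : ℝ → Fin 3 → ℝ) (hσ : ∀ s, σ s = Φ (u s, v s))
    :
    ∀ s, deriv (deriv σ) s =
      (deriv (deriv u) s + Γ111 (u s, v s) * (deriv u s) ^ 2 +
        2 * Γ112 (u s, v s) * deriv u s * deriv v s +
        Γ122 (u s, v s) * (deriv v s) ^ 2) • pu Φ (u s, v s) +
      (deriv (deriv v) s + Γ211 (u s, v s) * (deriv u s) ^ 2 +
        2 * Γ212 (u s, v s) * deriv u s * deriv v s +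
        Γ222 (u s, v s) * (deriv v s) ^ 2) • pv Φ (u s, v s) +
      (Lc (u s, v s) * (deriv u s) ^ 2 +
        2 * Mc (u s, v s) * deriv u s * deriv v s +
        Nc (u s, v s) * (deriv v s) ^ 2) • NN (u s, v s) := by
  have dΦ : Differentiable ℝ Φ := hΦ.differentiable (by simp)
  have hΦu : ContDiff ℝ (⊤ : ℕ∞) (pu Φ) := contDiff_pu hΦ
  have hΦv : ContDiff ℝ (⊤ : ℕ∞) (pv Φ) := contDiff_pv hΦ
  have dΦu : Differentiable ℝ (pu Φ) := hΦu.differentiable (by simp)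
  have dΦv : Differentiable ℝ (pv Φ) := hΦv.differentiable (by simp)
  have hsym : ∀ p, pu (pv Φ) p = pv (pu Φ) p := clairaut hΦ
  have hEf : E = fun q => pu Φ q ⬝ᵥ pu Φ q := funext hE
  have hFf : F = fun q => pu Φ q ⬝ᵥ pv Φ q := funext hF
  have hGf : G = fun q => pv Φ q ⬝ᵥ pv Φ q := funext hG
  -- scalar derivative identities
  have peq1 : ∀ p, pu (pu Φ) p ⬝ᵥ pu Φ p = pu E p / 2 := by
    intro p
    rw [hEf, pu_dot dΦu dΦu, dotProduct_comm (pu Φ p) (pu (pu Φ) p)]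
    ring
  have peq3 : ∀ p, pv (pu Φ) p ⬝ᵥ pu Φ p = pv E p / 2 := by
    intro p
    rw [hEf, pv_dot dΦu dΦu, dotProduct_comm (pu Φ p) (pv (pu Φ) p)]
    ring
  have peq4 : ∀ p, pv (pu Φ) p ⬝ᵥ pv Φ p = pu G p / 2 := by
    intro p
    rw [hGf, pu_dot dΦv dΦv, dotProduct_comm (pv Φ p) (pu (pv Φ) p), hsym p]
    ring
  have peq6 : ∀ p, pv (pv Φ) p ⬝ᵥ pv Φ p = pv G p / 2 := by
    intro p
    rw [hGf, pv_dot dΦv dΦv, dotProduct_comm (pv Φ p) (pv (pv Φ) p)]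
    ring
  have peq2 : ∀ p, pu (pu Φ) p ⬝ᵥ pv Φ p = pu F p - pv E p / 2 := by
    intro p
    rw [hFf, pu_dot dΦu dΦv, dotProduct_comm (pu Φ p) (pu (pv Φ) p), hsym p, peq3 p]
    ring
  have peq5 : ∀ p, pv (pv Φ) p ⬝ᵥ pu Φ p = pv F p - pu G p / 2 := by
    intro p
    rw [hFf, pv_dot dΦu dΦv, dotProduct_comm (pu Φ p) (pv (pv Φ) p), peq4 p]
    ring
  -- Gauss equations
  have gauss1 : ∀ p, pu (pu Φ) p = Γ111 p • pu Φ p + Γ211 p • pv Φ p + Lc p • NN p := by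
    intro p
    have hWp := (hW p).ne'
    have hd := decomp3 (hreg p) (a := Γ111 p) (b := Γ211 p)
      (h1 := by
        rw [peq1 p, ← hE p, ← hF p, hΓ111 p, hΓ211 p]
        rw [div_mul_eq_mul_div, div_mul_eq_mul_div, ← add_div, eq_div_iff (mul_ne_zero two_ne_zero hWp)]
        ring)
      (h2 := by
        rw [peq2 p, ← hF p, ← hG p, hΓ111 p, hΓ211 p]
        rw [div_mul_eq_mul_div, div_mul_eq_mul_div, ← add_div, eq_div_iff (mul_ne_zero two_ne_zero hWp)]
        ring)
    rw [hd, ← hNN p, ← hLc p]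
  have gauss2 : ∀ p, pv (pu Φ) p = Γ112 p • pu Φ p + Γ212 p • pv Φ p + Mc p • NN p := by
    intro p
    have hWp := (hW p).ne'
    have hd := decomp3 (hreg p) (a := Γ112 p) (b := Γ212 p)
      (h1 := by
        rw [peq3 p, ← hE p, ← hF p, hΓ112 p, hΓ212 p]
        rw [div_mul_eq_mul_div, div_mul_eq_mul_div, ← add_div, eq_div_iff (mul_ne_zero two_ne_zero hWp)]
        ring)
      (h2 := by
        rw [peq4 p, ← hF p, ← hG p, hΓ112 p, hΓ212 p]
        rw [div_mul_eq_mul_div, div_mul_eq_mul_div, ← add_div, eq_div_iff (mul_ne_zero two_ne_zero hWp)]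
        ring)
    rw [hd, ← hNN p, ← hMc p]
  have gauss3 : ∀ p, pv (pv Φ) p = Γ122 p • pu Φ p + Γ222 p • pv Φ p + Nc p • NN p := by
    intro p
    have hWp := (hW p).ne'
    have hd := decomp3 (hreg p) (a := Γ122 p) (b := Γ222 p)
      (h1 := by
        rw [peq5 p, ← hE p, ← hF p, hΓ122 p, hΓ222 p]
        rw [div_mul_eq_mul_div, div_mul_eq_mul_div, ← add_div, eq_div_iff (mul_ne_zero two_ne_zero hWp)]
        ring)
      (h2 := by
        rw [peq6 p, ← hF p, ← hG p, hΓ122 p, hΓ222 p]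
        rw [div_mul_eq_mul_div, div_mul_eq_mul_div, ← add_div, eq_div_iff (mul_ne_zero two_ne_zero hWp)]
        ring)
    rw [hd, ← hNN p, ← hNc p]
  -- derivatives of the curve
  have hσf : σ = fun t => Φ (u t, v t) := funext hσ
  subst hσf
  have du : Differentiable ℝ u := hu.differentiable (by simp)
  have dv : Differentiable ℝ v := hv.differentiable (by simp)
  have hd1 : deriv (fun t => Φ (u t, v t)) =
      fun t => deriv u t • pu Φ (u t, v t) + deriv v t • pv Φ (u t, v t) :=
    funext fun t => (hasDerivAt_comp2 dΦ du dv t).deriv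
  intro s
  rw [hd1]
  have hu' : HasDerivAt (deriv u) (deriv (deriv u) s) s :=
    (((contDiff_deriv hu).differentiable (by simp)) s).hasDerivAt
  have hv' : HasDerivAt (deriv v) (deriv (deriv v) s) s :=
    (((contDiff_deriv hv).differentiable (by simp)) s).hasDerivAt
  have hA := hasDerivAt_comp2 dΦu du dv s
  have hB := hasDerivAt_comp2 dΦv du dv s
  have hT := (hu'.fun_smul hA).fun_add (hv'.fun_smul hB)
  rw [hT.deriv]
  rw [hsym (u s, v s), gauss1 (u s, v s), gauss2 (u s, v s), gauss3 (u s, v s)]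
  module
end
end

section
/- (Theorem 3.4: normal component under a conformal map.) Let σ(s) = Φ(u(s),v(s)) be osculating, i.e. σ = ξσ' + (μ/κ)σ'' for smooth ξ, μ, and let Φ̃ be conformally related to Φ with dilation factor δ. Define the image curve σ̃(s) = ξ(Φ̃_u u' + Φ̃_v v') + (μ/κ)(Φ̃_u u'' + Φ̃_v v'' + Φ̃_uu u'² + 2Φ̃_uv u'v' + Φ̃_vv v'²). Then σ̃·𝐍̃ − δ²(σ·𝐍) = (μ/κ)[u'²(L̃ − δ²L) + 2u'v'(M̃ − δ²M) + v'²(Ñ − δ²N)], all quantities on ℝ² evaluated at (u(s),v(s)). -/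
noncomputable section
open Matrix

section helper

variable {Φ : ℝ × ℝ → Fin 3 → ℝ} {u v : ℝ → ℝ}

lemma fderiv_apply_pair (hΦ : ContDiff ℝ (⊤ : ℕ∞) Φ) (p : ℝ × ℝ) (a b : ℝ) :
    fderiv ℝ Φ p (a, b) = a • pu Φ p + b • pv Φ p := by
  have h : ((a, b) : ℝ × ℝ) = a • ((1:ℝ), (0:ℝ)) + b • ((0:ℝ), (1:ℝ)) := by
    simp [Prod.ext_iff]
  rw [h, map_add, _root_.map_smul, _root_.map_smul]; rfl

lemma hasDerivAt_surf (hΦ : ContDiff ℝ (⊤ : ℕ∞) Φ) (hu : ContDiff ℝ (⊤ : ℕ∞) u) (hv : ContDiff ℝ (⊤ : ℕ∞) v)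
    (s : ℝ) :
    HasDerivAt (fun t => Φ (u t, v t))
      (deriv u s • pu Φ (u s, v s) + deriv v s • pv Φ (u s, v s)) s := by
  have hγ : HasDerivAt (fun t => (u t, v t)) (deriv u s, deriv v s) s :=
    ((hu.differentiable (by simp) s).hasDerivAt).prodMk ((hv.differentiable (by simp) s).hasDerivAt)
  have hf : HasFDerivAt Φ (fderiv ℝ Φ (u s, v s)) (u s, v s) :=
    (hΦ.differentiable (by simp) (u s, v s)).hasFDerivAt
  have := hf.comp_hasDerivAt s hγ
  simp [fderiv_apply_pair hΦ] at this; exact this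

lemma contDiff_fderiv (hΦ : ContDiff ℝ (⊤ : ℕ∞) Φ) : ContDiff ℝ (⊤ : ℕ∞) (fderiv ℝ Φ) :=
  hΦ.fderiv_right (by simp)

lemma hasFDerivAt_pu (hΦ : ContDiff ℝ (⊤ : ℕ∞) Φ) (p : ℝ × ℝ) :
    HasFDerivAt (pu Φ)
      ((ContinuousLinearMap.apply ℝ (Fin 3 → ℝ) (((1:ℝ), (0:ℝ)) : ℝ × ℝ)).comp
        (fderiv ℝ (fderiv ℝ Φ) p)) p := by
  have h2 : HasFDerivAt (fderiv ℝ Φ) (fderiv ℝ (fderiv ℝ Φ) p) p :=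
    ((contDiff_fderiv hΦ).differentiable (by simp) p).hasFDerivAt
  exact (ContinuousLinearMap.apply ℝ (Fin 3 → ℝ) (((1:ℝ), (0:ℝ)) : ℝ × ℝ)).hasFDerivAt.comp p h2

lemma hasFDerivAt_pv (hΦ : ContDiff ℝ (⊤ : ℕ∞) Φ) (p : ℝ × ℝ) :
    HasFDerivAt (pv Φ)
      ((ContinuousLinearMap.apply ℝ (Fin 3 → ℝ) (((0:ℝ), (1:ℝ)) : ℝ × ℝ)).comp
        (fderiv ℝ (fderiv ℝ Φ) p)) p := by
  have h2 : HasFDerivAt (fderiv ℝ Φ) (fderiv ℝ (fderiv ℝ Φ) p) p :=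
    ((contDiff_fderiv hΦ).differentiable (by simp) p).hasFDerivAt
  exact (ContinuousLinearMap.apply ℝ (Fin 3 → ℝ) (((0:ℝ), (1:ℝ)) : ℝ × ℝ)).hasFDerivAt.comp p h2

lemma pupu_eq (hΦ : ContDiff ℝ (⊤ : ℕ∞) Φ) (p : ℝ × ℝ) :
    pu (pu Φ) p = fderiv ℝ (fderiv ℝ Φ) p (1, 0) (1, 0) := by
  rw [pu, (hasFDerivAt_pu hΦ p).fderiv]; rfl

lemma pvpu_eq (hΦ : ContDiff ℝ (⊤ : ℕ∞) Φ) (p : ℝ × ℝ) :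
    pv (pu Φ) p = fderiv ℝ (fderiv ℝ Φ) p (0, 1) (1, 0) := by
  rw [pv, (hasFDerivAt_pu hΦ p).fderiv]; rfl

lemma pupv_eq (hΦ : ContDiff ℝ (⊤ : ℕ∞) Φ) (p : ℝ × ℝ) :
    pu (pv Φ) p = fderiv ℝ (fderiv ℝ Φ) p (1, 0) (0, 1) := by
  rw [pu, (hasFDerivAt_pv hΦ p).fderiv]; rfl

lemma pvpv_eq (hΦ : ContDiff ℝ (⊤ : ℕ∞) Φ) (p : ℝ × ℝ) :
    pv (pv Φ) p = fderiv ℝ (fderiv ℝ Φ) p (0, 1) (0, 1) := by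
  rw [pv, (hasFDerivAt_pv hΦ p).fderiv]; rfl

lemma mixed_symm (hΦ : ContDiff ℝ (⊤ : ℕ∞) Φ) (p : ℝ × ℝ) :
    pu (pv Φ) p = pv (pu Φ) p := by
  rw [pupv_eq hΦ, pvpu_eq hΦ]
  exact second_derivative_symmetric (fun y => (hΦ.differentiable (by simp) y).hasFDerivAt)
    (((contDiff_fderiv hΦ).differentiable (by simp) p).hasFDerivAt) _ _

lemma snd_apply_pair (hΦ : ContDiff ℝ (⊤ : ℕ∞) Φ) (p : ℝ × ℝ) (a b : ℝ) (w : ℝ × ℝ) :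
    fderiv ℝ (fderiv ℝ Φ) p (a, b) w =
      a • fderiv ℝ (fderiv ℝ Φ) p (1, 0) w + b • fderiv ℝ (fderiv ℝ Φ) p (0, 1) w := by
  have h : ((a, b) : ℝ × ℝ) = a • ((1:ℝ), (0:ℝ)) + b • ((0:ℝ), (1:ℝ)) := by
    simp [Prod.ext_iff]
  rw [h, map_add, _root_.map_smul, _root_.map_smul]
  simp

lemma hasDerivAt_pu_surf (hΦ : ContDiff ℝ (⊤ : ℕ∞) Φ) (hu : ContDiff ℝ (⊤ : ℕ∞) u) (hv : ContDiff ℝ (⊤ : ℕ∞) v)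
    (s : ℝ) :
    HasDerivAt (fun t => pu Φ (u t, v t))
      (deriv u s • pu (pu Φ) (u s, v s) + deriv v s • pv (pu Φ) (u s, v s)) s := by
  have hγ : HasDerivAt (fun t => (u t, v t)) (deriv u s, deriv v s) s :=
    ((hu.differentiable (by simp) s).hasDerivAt).prodMk ((hv.differentiable (by simp) s).hasDerivAt)
  have := (hasFDerivAt_pu hΦ (u s, v s)).comp_hasDerivAt s hγ
  have e : (ContinuousLinearMap.apply ℝ (Fin 3 → ℝ) (((1:ℝ), (0:ℝ)) : ℝ × ℝ)).comp
        (fderiv ℝ (fderiv ℝ Φ) (u s, v s)) (deriv u s, deriv v s)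
      = deriv u s • pu (pu Φ) (u s, v s) + deriv v s • pv (pu Φ) (u s, v s) := by
    rw [pupu_eq hΦ, pvpu_eq hΦ]
    exact snd_apply_pair hΦ _ _ _ _
  rwa [e] at this

lemma hasDerivAt_pv_surf (hΦ : ContDiff ℝ (⊤ : ℕ∞) Φ) (hu : ContDiff ℝ (⊤ : ℕ∞) u) (hv : ContDiff ℝ (⊤ : ℕ∞) v)
    (s : ℝ) :
    HasDerivAt (fun t => pv Φ (u t, v t))
      (deriv u s • pu (pv Φ) (u s, v s) + deriv v s • pv (pv Φ) (u s, v s)) s := by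
  have hγ : HasDerivAt (fun t => (u t, v t)) (deriv u s, deriv v s) s :=
    ((hu.differentiable (by simp) s).hasDerivAt).prodMk ((hv.differentiable (by simp) s).hasDerivAt)
  have := (hasFDerivAt_pv hΦ (u s, v s)).comp_hasDerivAt s hγ
  have e : (ContinuousLinearMap.apply ℝ (Fin 3 → ℝ) (((0:ℝ), (1:ℝ)) : ℝ × ℝ)).comp
        (fderiv ℝ (fderiv ℝ Φ) (u s, v s)) (deriv u s, deriv v s)
      = deriv u s • pu (pv Φ) (u s, v s) + deriv v s • pv (pv Φ) (u s, v s) := by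
    rw [pupv_eq hΦ, pvpv_eq hΦ]
    exact snd_apply_pair hΦ _ _ _ _
  rwa [e] at this

lemma deriv2_surf (hΦ : ContDiff ℝ (⊤ : ℕ∞) Φ) (hu : ContDiff ℝ (⊤ : ℕ∞) u) (hv : ContDiff ℝ (⊤ : ℕ∞) v) (s : ℝ) :
    deriv (deriv (fun t => Φ (u t, v t))) s =
      deriv (deriv u) s • pu Φ (u s, v s) + deriv (deriv v) s • pv Φ (u s, v s) +
      (deriv u s) ^ 2 • pu (pu Φ) (u s, v s) +
      (2 * deriv u s * deriv v s) • pv (pu Φ) (u s, v s) +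
      (deriv v s) ^ 2 • pv (pv Φ) (u s, v s) := by
  have hd : deriv (fun t => Φ (u t, v t)) =
      fun t => deriv u t • pu Φ (u t, v t) + deriv v t • pv Φ (u t, v t) :=
    funext fun t => (hasDerivAt_surf hΦ hu hv t).deriv
  rw [hd]
  have hcd : ∀ w : ℝ → ℝ, ContDiff ℝ (⊤ : ℕ∞) w → ContDiff ℝ (⊤ : ℕ∞) (deriv w) := by
    intro w hw
    exact (hw.fderiv_right (m := (⊤ : ℕ∞)) (by simp)).clm_apply (contDiff_const (c := (1:ℝ)))
  have hu' : HasDerivAt (deriv u) (deriv (deriv u) s) s :=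
    ((hcd u hu).differentiable (by simp) s).hasDerivAt
  have hv' : HasDerivAt (deriv v) (deriv (deriv v) s) s :=
    ((hcd v hv).differentiable (by simp) s).hasDerivAt
  have h1 := hu'.smul (hasDerivAt_pu_surf hΦ hu hv s)
  have h2 := hv'.smul (hasDerivAt_pv_surf hΦ hu hv s)
  rw [(show HasDerivAt (fun t => deriv u t • pu Φ (u t, v t) + deriv v t • pv Φ (u t, v t)) _ s from h1.add h2).deriv, mixed_symm hΦ]
  have e1 : deriv u s • (deriv u s • pu (pu Φ) (u s, v s) + deriv v s • pv (pu Φ) (u s, v s)) =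
      (deriv u s)^2 • pu (pu Φ) (u s, v s) + (deriv u s * deriv v s) • pv (pu Φ) (u s, v s) := by
    rw [smul_add, smul_smul, smul_smul]; ring_nf
  have e2 : deriv v s • (deriv u s • pv (pu Φ) (u s, v s) + deriv v s • pv (pv Φ) (u s, v s)) =
      (deriv u s * deriv v s) • pv (pu Φ) (u s, v s) + (deriv v s)^2 • pv (pv Φ) (u s, v s) := by
    rw [smul_add, smul_smul, smul_smul]; ring_nf
  rw [e1, e2]
  have : (2 * deriv u s * deriv v s) • pv (pu Φ) (u s, v s) =
      (deriv u s * deriv v s) • pv (pu Φ) (u s, v s) +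
      (deriv u s * deriv v s) • pv (pu Φ) (u s, v s) := by
    rw [← add_smul]; ring_nf
  rw [this]; abel

lemma orth_pu (Ψ : ℝ × ℝ → Fin 3 → ℝ) (NN : ℝ × ℝ → Fin 3 → ℝ)
    (hNN : ∀ p, NN p =
      (enorm3 (crossProduct (pu Ψ p) (pv Ψ p)))⁻¹ • crossProduct (pu Ψ p) (pv Ψ p))
    (p : ℝ × ℝ) : pu Ψ p ⬝ᵥ NN p = 0 := by
  rw [hNN, dotProduct_smul, dot_self_cross, smul_zero]

lemma orth_pv (Ψ : ℝ × ℝ → Fin 3 → ℝ) (NN : ℝ × ℝ → Fin 3 → ℝ)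
    (hNN : ∀ p, NN p =
      (enorm3 (crossProduct (pu Ψ p) (pv Ψ p)))⁻¹ • crossProduct (pu Ψ p) (pv Ψ p))
    (p : ℝ × ℝ) : pv Ψ p ⬝ᵥ NN p = 0 := by
  rw [hNN, dotProduct_smul, dot_cross_self, smul_zero]

end helper

theorem normal_component_under_conformal_map
    (Φ : ℝ × ℝ → Fin 3 → ℝ) (hΦ : ContDiff ℝ (⊤ : ℕ∞) Φ)
    (hreg : ∀ p, crossProduct (pu Φ p) (pv Φ p) ≠ 0)
    (E F G : ℝ × ℝ → ℝ)
    (hE : ∀ p, E p = pu Φ p ⬝ᵥ pu Φ p) (hF : ∀ p, F p = pu Φ p ⬝ᵥ pv Φ p)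
    (hG : ∀ p, G p = pv Φ p ⬝ᵥ pv Φ p)
    (NN : ℝ × ℝ → Fin 3 → ℝ)
    (hNN : ∀ p, NN p =
      (enorm3 (crossProduct (pu Φ p) (pv Φ p)))⁻¹ • crossProduct (pu Φ p) (pv Φ p))
    (Lc Mc Nc : ℝ × ℝ → ℝ)
    (hLc : ∀ p, Lc p = pu (pu Φ) p ⬝ᵥ NN p) (hMc : ∀ p, Mc p = pv (pu Φ) p ⬝ᵥ NN p)
    (hNc : ∀ p, Nc p = pv (pv Φ) p ⬝ᵥ NN p)
    (Φt : ℝ × ℝ → Fin 3 → ℝ) (hΦt : ContDiff ℝ (⊤ : ℕ∞) Φt)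
    (hregt : ∀ p, crossProduct (pu Φt p) (pv Φt p) ≠ 0)
    (Et Ft Gt : ℝ × ℝ → ℝ)
    (hEt : ∀ p, Et p = pu Φt p ⬝ᵥ pu Φt p) (hFt : ∀ p, Ft p = pu Φt p ⬝ᵥ pv Φt p)
    (hGt : ∀ p, Gt p = pv Φt p ⬝ᵥ pv Φt p)
    (NNt : ℝ × ℝ → Fin 3 → ℝ)
    (hNNt : ∀ p, NNt p =
      (enorm3 (crossProduct (pu Φt p) (pv Φt p)))⁻¹ • crossProduct (pu Φt p) (pv Φt p))
    (Lct Mct Nct : ℝ × ℝ → ℝ)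
    (hLct : ∀ p, Lct p = pu (pu Φt) p ⬝ᵥ NNt p) (hMct : ∀ p, Mct p = pv (pu Φt) p ⬝ᵥ NNt p)
    (hNct : ∀ p, Nct p = pv (pv Φt) p ⬝ᵥ NNt p)
    (δ : ℝ × ℝ → ℝ) (hδ : ContDiff ℝ (⊤ : ℕ∞) δ) (hδpos : ∀ p, 0 < δ p)
    (hcE : ∀ p, Et p = δ p ^ 2 * E p) (hcF : ∀ p, Ft p = δ p ^ 2 * F p)
    (hcG : ∀ p, Gt p = δ p ^ 2 * G p)
    (u v : ℝ → ℝ) (hu : ContDiff ℝ (⊤ : ℕ∞) u) (hv : ContDiff ℝ (⊤ : ℕ∞) v)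
    (σ : ℝ → Fin 3 → ℝ) (hσ : ∀ s, σ s = Φ (u s, v s))
    (hunit : ∀ s, enorm3 (deriv σ s) = 1)
    (κ : ℝ → ℝ) (hκ : ∀ s, κ s = enorm3 (deriv (deriv σ) s)) (hκ0 : ∀ s, κ s ≠ 0)
    (ξ μ : ℝ → ℝ) (hξ : ContDiff ℝ (⊤ : ℕ∞) ξ) (hμ : ContDiff ℝ (⊤ : ℕ∞) μ)
    (hosc : ∀ s, σ s = ξ s • deriv σ s + (μ s / κ s) • deriv (deriv σ) s)
    (σt : ℝ → Fin 3 → ℝ)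
    (hσt : ∀ s, σt s =
      ξ s • (deriv u s • pu Φt (u s, v s) + deriv v s • pv Φt (u s, v s)) +
      (μ s / κ s) •
        (deriv (deriv u) s • pu Φt (u s, v s) + deriv (deriv v) s • pv Φt (u s, v s) +
         (deriv u s) ^ 2 • pu (pu Φt) (u s, v s) +
         (2 * deriv u s * deriv v s) • pv (pu Φt) (u s, v s) +
         (deriv v s) ^ 2 • pv (pv Φt) (u s, v s)))
    :
    ∀ s, σt s ⬝ᵥ NNt (u s, v s) - δ (u s, v s) ^ 2 * (σ s ⬝ᵥ NN (u s, v s)) =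
      (μ s / κ s) *
        ((deriv u s) ^ 2 * (Lct (u s, v s) - δ (u s, v s) ^ 2 * Lc (u s, v s)) +
         2 * deriv u s * deriv v s * (Mct (u s, v s) - δ (u s, v s) ^ 2 * Mc (u s, v s)) +
         (deriv v s) ^ 2 * (Nct (u s, v s) - δ (u s, v s) ^ 2 * Nc (u s, v s))) := by

  intro s
  have hσfun : σ = fun t => Φ (u t, v t) := funext hσ
  have oU : pu Φ (u s, v s) ⬝ᵥ NN (u s, v s) = 0 := orth_pu Φ NN hNN _
  have oV : pv Φ (u s, v s) ⬝ᵥ NN (u s, v s) = 0 := orth_pv Φ NN hNN _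
  have oUt : pu Φt (u s, v s) ⬝ᵥ NNt (u s, v s) = 0 := orth_pu Φt NNt hNNt _
  have oVt : pv Φt (u s, v s) ⬝ᵥ NNt (u s, v s) = 0 := orth_pv Φt NNt hNNt _
  have h1 : deriv σ s = deriv u s • pu Φ (u s, v s) + deriv v s • pv Φ (u s, v s) := by
    rw [hσfun]; exact (hasDerivAt_surf hΦ hu hv s).deriv
  have h2 : deriv (deriv σ) s =
      deriv (deriv u) s • pu Φ (u s, v s) + deriv (deriv v) s • pv Φ (u s, v s) +
      (deriv u s) ^ 2 • pu (pu Φ) (u s, v s) +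
      (2 * deriv u s * deriv v s) • pv (pu Φ) (u s, v s) +
      (deriv v s) ^ 2 • pv (pv Φ) (u s, v s) := by
    rw [hσfun]; exact deriv2_surf hΦ hu hv s
  have hB : σ s ⬝ᵥ NN (u s, v s) =
      (μ s / κ s) * ((deriv u s) ^ 2 * Lc (u s, v s) +
        2 * deriv u s * deriv v s * Mc (u s, v s) + (deriv v s) ^ 2 * Nc (u s, v s)) := by
    rw [hosc s, h1, h2, hLc, hMc, hNc]
    simp only [add_dotProduct, smul_dotProduct, smul_add, oU, oV, smul_eq_mul]
    ring
  have hA : σt s ⬝ᵥ NNt (u s, v s) =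
      (μ s / κ s) * ((deriv u s) ^ 2 * Lct (u s, v s) +
        2 * deriv u s * deriv v s * Mct (u s, v s) + (deriv v s) ^ 2 * Nct (u s, v s)) := by
    rw [hσt s, hLct, hMct, hNct]
    simp only [add_dotProduct, smul_dotProduct, smul_add, oUt, oVt, smul_eq_mul]
    ring
  rw [hA, hB]
  ring
end
end

section
/- (Corollary 3.5: conformal invariance of the normal component.) In the setting of Theorem 3.4, with κ_n = L u'² + 2M u'v' + N v'² and κ̃_n = L̃ u'² + 2M̃ u'v' + Ñ v'² evaluated along the curve, if at a parameter s any one of the following holds: (i) μ(s) = 0 (the position vector is along the tangent), (ii) κ_n(s) = 0 and κ̃_n(s) = 0 (the curve is asymptotic for both patches), or (iii) κ̃_n(s) = δ²κ_n(s), then σ̃(s)·𝐍̃ = δ²(σ(s)·𝐍), i.e. the normal component of σ is conformally invariant. -/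
noncomputable section
open Matrix

section Helpers

variable {EE : Type*} [NormedAddCommGroup EE] [NormedSpace ℝ EE]

lemma pu_contDiff' {f : ℝ × ℝ → EE} (hf : ContDiff ℝ (⊤ : ℕ∞) f) : ContDiff ℝ (⊤ : ℕ∞) (pu f) :=
  (hf.fderiv_right (by simp)).clm_apply contDiff_const

lemma pv_contDiff' {f : ℝ × ℝ → EE} (hf : ContDiff ℝ (⊤ : ℕ∞) f) : ContDiff ℝ (⊤ : ℕ∞) (pv f) :=
  (hf.fderiv_right (by simp)).clm_apply contDiff_const

lemma chainD' {f : ℝ × ℝ → EE} (hf : ContDiff ℝ (⊤ : ℕ∞) f) {u v : ℝ → ℝ}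
    (hu : ContDiff ℝ (⊤ : ℕ∞) u) (hv : ContDiff ℝ (⊤ : ℕ∞) v) (s : ℝ) :
    HasDerivAt (fun t => f (u t, v t))
      (deriv u s • pu f (u s, v s) + deriv v s • pv f (u s, v s)) s := by
  have hg : HasDerivAt (fun t => (u t, v t)) (deriv u s, deriv v s) s :=
    ((hu.differentiable (by simp) s).hasDerivAt).prodMk ((hv.differentiable (by simp) s).hasDerivAt)
  have hf' : HasFDerivAt f (fderiv ℝ f (u s, v s)) (u s, v s) :=
    (hf.differentiable (by simp) _).hasFDerivAt
  have h := hf'.comp_hasDerivAt s hg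
  have heq : fderiv ℝ f (u s, v s) (deriv u s, deriv v s)
      = deriv u s • pu f (u s, v s) + deriv v s • pv f (u s, v s) := by
    have h2 : (deriv u s, deriv v s)
        = deriv u s • ((1:ℝ), (0:ℝ)) + deriv v s • ((0:ℝ), (1:ℝ)) := by
      simp [Prod.ext_iff]
    rw [h2, map_add, _root_.map_smul, _root_.map_smul]; rfl
  rwa [heq] at h

lemma symm_mixed' {f : ℝ × ℝ → EE} [CompleteSpace EE] (hf : ContDiff ℝ (⊤ : ℕ∞) f) (p : ℝ × ℝ) :
    pu (pv f) p = pv (pu f) p := by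
  have hsymm := (hf.contDiffAt (x := p)).isSymmSndFDerivAt
    (by rw [minSmoothness_of_isRCLikeNormedField]; exact WithTop.coe_le_coe.mpr le_top)
  have hdiff : DifferentiableAt ℝ (fderiv ℝ f) p :=
    ((hf.fderiv_right (m := 1) (by exact WithTop.coe_le_coe.mpr le_top)).differentiable (by simp)) p
  have h1 : pu (pv f) p = fderiv ℝ (fderiv ℝ f) p (1, 0) (0, 1) := by
    unfold pu pv
    rw [fderiv_clm_apply hdiff (differentiableAt_const _)]
    simp
  have h2 : pv (pu f) p = fderiv ℝ (fderiv ℝ f) p (0, 1) (1, 0) := by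
    unfold pu pv
    rw [fderiv_clm_apply hdiff (differentiableAt_const _)]
    simp
  rw [h1, h2, hsymm]

lemma derivCD {u : ℝ → ℝ} (hu : ContDiff ℝ (⊤ : ℕ∞) u) (s : ℝ) :
    HasDerivAt (deriv u) (deriv (deriv u) s) s :=
  (((contDiff_infty_iff_deriv.mp (hu.of_le (by simp))).2.differentiable
    (by simp)) s).hasDerivAt

end Helpers

theorem conformal_invariance_of_normal_component
    (Φ : ℝ × ℝ → Fin 3 → ℝ) (hΦ : ContDiff ℝ (⊤ : ℕ∞) Φ)
    (hreg : ∀ p, crossProduct (pu Φ p) (pv Φ p) ≠ 0)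
    (E F G : ℝ × ℝ → ℝ)
    (hE : ∀ p, E p = pu Φ p ⬝ᵥ pu Φ p) (hF : ∀ p, F p = pu Φ p ⬝ᵥ pv Φ p)
    (hG : ∀ p, G p = pv Φ p ⬝ᵥ pv Φ p)
    (NN : ℝ × ℝ → Fin 3 → ℝ)
    (hNN : ∀ p, NN p =
      (enorm3 (crossProduct (pu Φ p) (pv Φ p)))⁻¹ • crossProduct (pu Φ p) (pv Φ p))
    (Lc Mc Nc : ℝ × ℝ → ℝ)
    (hLc : ∀ p, Lc p = pu (pu Φ) p ⬝ᵥ NN p) (hMc : ∀ p, Mc p = pv (pu Φ) p ⬝ᵥ NN p)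
    (hNc : ∀ p, Nc p = pv (pv Φ) p ⬝ᵥ NN p)
    (Φt : ℝ × ℝ → Fin 3 → ℝ) (hΦt : ContDiff ℝ (⊤ : ℕ∞) Φt)
    (hregt : ∀ p, crossProduct (pu Φt p) (pv Φt p) ≠ 0)
    (Et Ft Gt : ℝ × ℝ → ℝ)
    (hEt : ∀ p, Et p = pu Φt p ⬝ᵥ pu Φt p) (hFt : ∀ p, Ft p = pu Φt p ⬝ᵥ pv Φt p)
    (hGt : ∀ p, Gt p = pv Φt p ⬝ᵥ pv Φt p)
    (NNt : ℝ × ℝ → Fin 3 → ℝ)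
    (hNNt : ∀ p, NNt p =
      (enorm3 (crossProduct (pu Φt p) (pv Φt p)))⁻¹ • crossProduct (pu Φt p) (pv Φt p))
    (Lct Mct Nct : ℝ × ℝ → ℝ)
    (hLct : ∀ p, Lct p = pu (pu Φt) p ⬝ᵥ NNt p) (hMct : ∀ p, Mct p = pv (pu Φt) p ⬝ᵥ NNt p)
    (hNct : ∀ p, Nct p = pv (pv Φt) p ⬝ᵥ NNt p)
    (δ : ℝ × ℝ → ℝ) (hδ : ContDiff ℝ (⊤ : ℕ∞) δ) (hδpos : ∀ p, 0 < δ p)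
    (hcE : ∀ p, Et p = δ p ^ 2 * E p) (hcF : ∀ p, Ft p = δ p ^ 2 * F p)
    (hcG : ∀ p, Gt p = δ p ^ 2 * G p)
    (u v : ℝ → ℝ) (hu : ContDiff ℝ (⊤ : ℕ∞) u) (hv : ContDiff ℝ (⊤ : ℕ∞) v)
    (σ : ℝ → Fin 3 → ℝ) (hσ : ∀ s, σ s = Φ (u s, v s))
    (hunit : ∀ s, enorm3 (deriv σ s) = 1)
    (κ : ℝ → ℝ) (hκ : ∀ s, κ s = enorm3 (deriv (deriv σ) s)) (hκ0 : ∀ s, κ s ≠ 0)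
    (ξ μ : ℝ → ℝ) (hξ : ContDiff ℝ (⊤ : ℕ∞) ξ) (hμ : ContDiff ℝ (⊤ : ℕ∞) μ)
    (hosc : ∀ s, σ s = ξ s • deriv σ s + (μ s / κ s) • deriv (deriv σ) s)
    (σt : ℝ → Fin 3 → ℝ)
    (hσt : ∀ s, σt s =
      ξ s • (deriv u s • pu Φt (u s, v s) + deriv v s • pv Φt (u s, v s)) +
      (μ s / κ s) •
        (deriv (deriv u) s • pu Φt (u s, v s) + deriv (deriv v) s • pv Φt (u s, v s) +
         (deriv u s) ^ 2 • pu (pu Φt) (u s, v s) +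
         (2 * deriv u s * deriv v s) • pv (pu Φt) (u s, v s) +
         (deriv v s) ^ 2 • pv (pv Φt) (u s, v s)))
    (κn κtn : ℝ → ℝ)
    (hκn : ∀ s, κn s =
      Lc (u s, v s) * (deriv u s) ^ 2 + 2 * Mc (u s, v s) * deriv u s * deriv v s +
        Nc (u s, v s) * (deriv v s) ^ 2)
    (hκtn : ∀ s, κtn s =
      Lct (u s, v s) * (deriv u s) ^ 2 + 2 * Mct (u s, v s) * deriv u s * deriv v s +
        Nct (u s, v s) * (deriv v s) ^ 2)
    (s : ℝ)
    (hcond : μ s = 0 ∨ (κn s = 0 ∧ κtn s = 0) ∨ κtn s = δ (u s, v s) ^ 2 * κn s) :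
    σt s ⬝ᵥ NNt (u s, v s) = δ (u s, v s) ^ 2 * (σ s ⬝ᵥ NN (u s, v s)) := by
  -- orthogonality of tangent vectors to the normals
  have huN : pu Φ (u s, v s) ⬝ᵥ NN (u s, v s) = 0 := by
    rw [hNN, dotProduct_smul, dot_self_cross, smul_zero]
  have hvN : pv Φ (u s, v s) ⬝ᵥ NN (u s, v s) = 0 := by
    rw [hNN, dotProduct_smul, dot_cross_self, smul_zero]
  have huNt : pu Φt (u s, v s) ⬝ᵥ NNt (u s, v s) = 0 := by
    rw [hNNt, dotProduct_smul, dot_self_cross, smul_zero]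
  have hvNt : pv Φt (u s, v s) ⬝ᵥ NNt (u s, v s) = 0 := by
    rw [hNNt, dotProduct_smul, dot_cross_self, smul_zero]
  -- first derivative of σ
  have hσfun : σ = fun t => Φ (u t, v t) := funext hσ
  have hd1 : ∀ t, HasDerivAt σ
      (deriv u t • pu Φ (u t, v t) + deriv v t • pv Φ (u t, v t)) t := by
    rw [hσfun]; intro t; exact chainD' hΦ hu hv t
  have hderiv1 : deriv σ
      = fun t => deriv u t • pu Φ (u t, v t) + deriv v t • pv Φ (u t, v t) :=
    funext fun t => (hd1 t).deriv
  -- second derivative of σ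
  have hA : HasDerivAt (fun t => deriv u t • pu Φ (u t, v t))
      (deriv u s • (deriv u s • pu (pu Φ) (u s, v s) + deriv v s • pv (pu Φ) (u s, v s))
        + deriv (deriv u) s • pu Φ (u s, v s)) s :=
    (derivCD hu s).smul (chainD' (pu_contDiff' hΦ) hu hv s)
  have hB : HasDerivAt (fun t => deriv v t • pv Φ (u t, v t))
      (deriv v s • (deriv u s • pu (pv Φ) (u s, v s) + deriv v s • pv (pv Φ) (u s, v s))
        + deriv (deriv v) s • pv Φ (u s, v s)) s :=
    (derivCD hv s).smul (chainD' (pv_contDiff' hΦ) hu hv s)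
  have hd2 : HasDerivAt (deriv σ)
      ((deriv u s • (deriv u s • pu (pu Φ) (u s, v s) + deriv v s • pv (pu Φ) (u s, v s))
        + deriv (deriv u) s • pu Φ (u s, v s))
        + (deriv v s • (deriv u s • pu (pv Φ) (u s, v s) + deriv v s • pv (pv Φ) (u s, v s))
        + deriv (deriv v) s • pv Φ (u s, v s))) s := by
    rw [hderiv1]; exact hA.add hB
  -- normal component of σ
  have hdotσ : σ s ⬝ᵥ NN (u s, v s) = μ s / κ s * κn s := by
    rw [hosc s, (hd1 s).deriv, hd2.deriv, hκn s, hLc (u s, v s), hMc (u s, v s),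
      hNc (u s, v s), symm_mixed' hΦ (u s, v s)]
    simp only [add_dotProduct, smul_dotProduct, smul_eq_mul, huN, hvN, mul_zero,
      add_zero, zero_add]
    ring
  -- normal component of σt
  have hdotσt : σt s ⬝ᵥ NNt (u s, v s) = μ s / κ s * κtn s := by
    rw [hσt s, hκtn s, hLct (u s, v s), hMct (u s, v s), hNct (u s, v s)]
    simp only [add_dotProduct, smul_dotProduct, smul_eq_mul, huNt, hvNt, mul_zero,
      add_zero, zero_add]
    ring
  rw [hdotσ, hdotσt]
  rcases hcond with h | ⟨h1, h2⟩ | h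
  · rw [h]; ring
  · rw [h1, h2]; ring
  · rw [h]; ring
end
end

section
/- (Corollaries 3.6 and 3.7: homothetic and isometric invariance of the normal component.) In the setting of Theorem 3.4 with the dilation factor constant, δ ≡ c for a nonzero real constant c, if at a parameter s either μ(s) = 0, or κ_n(s) = κ̃_n(s) = 0, or κ̃_n(s) = c²κ_n(s), then σ̃(s)·𝐍̃ = c²(σ(s)·𝐍); in particular for c = 1 (isometry) σ̃(s)·𝐍̃ = σ(s)·𝐍. -/
noncomputable section
open Matrix

lemma clm_pair {E : Type*} [NormedAddCommGroup E] [NormedSpace ℝ E] (f : ℝ × ℝ →L[ℝ] E) (a b : ℝ) :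
    f (a, b) = a • f (1, 0) + b • f (0, 1) := by
  have h : (a, b) = a • ((1:ℝ), (0:ℝ)) + b • ((0:ℝ), (1:ℝ)) := by
    simp [Prod.ext_iff]
  rw [h, map_add, _root_.map_smul, _root_.map_smul]

lemma hasDerivAt_comp2_s10 {E : Type*} [NormedAddCommGroup E] [NormedSpace ℝ E]
    (Φ : ℝ × ℝ → E) (hΦ : Differentiable ℝ Φ)
    (u v : ℝ → ℝ) (hu : Differentiable ℝ u) (hv : Differentiable ℝ v) (s : ℝ) :
    HasDerivAt (fun t => Φ (u t, v t)) (fderiv ℝ Φ (u s, v s) (deriv u s, deriv v s)) s := by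
  have hγ : HasDerivAt (fun t => (u t, v t)) (deriv u s, deriv v s) s :=
    HasDerivAt.prodMk ((hu s).hasDerivAt) ((hv s).hasDerivAt)
  exact ((hΦ (u s, v s)).hasFDerivAt).comp_hasDerivAt s hγ

lemma deriv1_comp (Φ : ℝ × ℝ → Fin 3 → ℝ) (hΦ : Differentiable ℝ Φ)
    (u v : ℝ → ℝ) (hu : Differentiable ℝ u) (hv : Differentiable ℝ v) (s : ℝ) :
    deriv (fun t => Φ (u t, v t)) s =
      deriv u s • pu Φ (u s, v s) + deriv v s • pv Φ (u s, v s) := by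
  rw [(hasDerivAt_comp2_s10 Φ hΦ u v hu hv s).deriv, clm_pair]
  rfl

lemma fderiv_apply_const {E : Type*} [NormedAddCommGroup E] [NormedSpace ℝ E]
    (Φ : ℝ × ℝ → E) (h : DifferentiableAt ℝ (fderiv ℝ Φ) p) (z w : ℝ × ℝ) :
    fderiv ℝ (fun q => fderiv ℝ Φ q z) p w = fderiv ℝ (fderiv ℝ Φ) p w z := by
  rw [fderiv_clm_apply h (differentiableAt_const z)]
  simp

lemma deriv2_comp (Φ : ℝ × ℝ → Fin 3 → ℝ) (hΦ : ContDiff ℝ (⊤ : ℕ∞) Φ)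
    (u v : ℝ → ℝ) (hu : ContDiff ℝ (⊤ : ℕ∞) u) (hv : ContDiff ℝ (⊤ : ℕ∞) v) (s : ℝ) :
    deriv (deriv (fun t => Φ (u t, v t))) s =
      deriv (deriv u) s • pu Φ (u s, v s) + deriv (deriv v) s • pv Φ (u s, v s) +
      (deriv u s) ^ 2 • pu (pu Φ) (u s, v s) +
      (2 * deriv u s * deriv v s) • pv (pu Φ) (u s, v s) +
      (deriv v s) ^ 2 • pv (pv Φ) (u s, v s) := by
  have hΦd : Differentiable ℝ Φ := hΦ.differentiable (by simp)
  have hΦ' : ContDiff ℝ (⊤ : ℕ∞) (fderiv ℝ Φ) := hΦ.fderiv_right (by simp)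
  have hΦ'd : Differentiable ℝ (fderiv ℝ Φ) := hΦ'.differentiable (by simp)
  have hud : Differentiable ℝ u := hu.differentiable (by simp)
  have hvd : Differentiable ℝ v := hv.differentiable (by simp)
  have hdud : Differentiable ℝ (deriv u) :=
    ((contDiff_infty_iff_deriv.mp (hu.of_le (by simp))).2).differentiable (by simp)
  have hdvd : Differentiable ℝ (deriv v) :=
    ((contDiff_infty_iff_deriv.mp (hv.of_le (by simp))).2).differentiable (by simp)
  have h1 : deriv (fun t => Φ (u t, v t)) =
      fun t => fderiv ℝ Φ (u t, v t) (deriv u t, deriv v t) :=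
    funext fun t => (hasDerivAt_comp2_s10 Φ hΦd u v hud hvd t).deriv
  rw [h1]
  set p := (u s, v s)
  have hA : HasDerivAt (fun t => fderiv ℝ Φ (u t, v t))
      (fderiv ℝ (fderiv ℝ Φ) p (deriv u s, deriv v s)) s := by
    have hγ : HasDerivAt (fun t => (u t, v t)) (deriv u s, deriv v s) s :=
      HasDerivAt.prodMk ((hud s).hasDerivAt) ((hvd s).hasDerivAt)
    exact ((hΦ'd p).hasFDerivAt).comp_hasDerivAt s hγ
  have hx : HasDerivAt (fun t => (deriv u t, deriv v t))
      (deriv (deriv u) s, deriv (deriv v) s) s :=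
    HasDerivAt.prodMk ((hdud s).hasDerivAt) ((hdvd s).hasDerivAt)
  rw [(HasDerivAt.clm_apply hA hx).deriv]
  set B := fderiv ℝ (fderiv ℝ Φ) p with hB
  have hsymm : B (1, 0) (0, 1) = B (0, 1) (1, 0) :=
    (hΦ.contDiffAt.isSymmSndFDerivAt (by rw [minSmoothness_of_isRCLikeNormedField]; show ((2 : ℕ∞) : WithTop ℕ∞) ≤ ((⊤ : ℕ∞) : WithTop ℕ∞); exact WithTop.coe_le_coe.mpr le_top)) _ _
  have e1 : pu (pu Φ) p = B (1, 0) (1, 0) := fderiv_apply_const Φ (hΦ'd p) _ _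
  have e2 : pv (pu Φ) p = B (0, 1) (1, 0) := fderiv_apply_const Φ (hΦ'd p) _ _
  have e3 : pv (pv Φ) p = B (0, 1) (0, 1) := fderiv_apply_const Φ (hΦ'd p) _ _
  have hBapp : B (deriv u s, deriv v s) (deriv u s, deriv v s) =
      (deriv u s)^2 • B (1,0) (1,0) + (2 * deriv u s * deriv v s) • B (0,1) (1,0) +
      (deriv v s)^2 • B (0,1) (0,1) := by
    rw [clm_pair B (deriv u s) (deriv v s)]
    simp only [ContinuousLinearMap.add_apply, ContinuousLinearMap.smul_apply]
    rw [clm_pair (B (1,0)), clm_pair (B (0,1)), hsymm]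
    simp only [smul_add, smul_smul]
    module
  rw [hBapp, clm_pair (fderiv ℝ Φ p) (deriv (deriv u) s) (deriv (deriv v) s), e1, e2, e3]
  simp only [pu, pv]
  module

theorem homothetic_invariance_of_normal_component
    (Φ : ℝ × ℝ → Fin 3 → ℝ) (hΦ : ContDiff ℝ (⊤ : ℕ∞) Φ)
    (hreg : ∀ p, crossProduct (pu Φ p) (pv Φ p) ≠ 0)
    (E F G : ℝ × ℝ → ℝ)
    (hE : ∀ p, E p = pu Φ p ⬝ᵥ pu Φ p) (hF : ∀ p, F p = pu Φ p ⬝ᵥ pv Φ p)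
    (hG : ∀ p, G p = pv Φ p ⬝ᵥ pv Φ p)
    (NN : ℝ × ℝ → Fin 3 → ℝ)
    (hNN : ∀ p, NN p =
      (enorm3 (crossProduct (pu Φ p) (pv Φ p)))⁻¹ • crossProduct (pu Φ p) (pv Φ p))
    (Lc Mc Nc : ℝ × ℝ → ℝ)
    (hLc : ∀ p, Lc p = pu (pu Φ) p ⬝ᵥ NN p) (hMc : ∀ p, Mc p = pv (pu Φ) p ⬝ᵥ NN p)
    (hNc : ∀ p, Nc p = pv (pv Φ) p ⬝ᵥ NN p)
    (Φt : ℝ × ℝ → Fin 3 → ℝ) (hΦt : ContDiff ℝ (⊤ : ℕ∞) Φt)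
    (hregt : ∀ p, crossProduct (pu Φt p) (pv Φt p) ≠ 0)
    (Et Ft Gt : ℝ × ℝ → ℝ)
    (hEt : ∀ p, Et p = pu Φt p ⬝ᵥ pu Φt p) (hFt : ∀ p, Ft p = pu Φt p ⬝ᵥ pv Φt p)
    (hGt : ∀ p, Gt p = pv Φt p ⬝ᵥ pv Φt p)
    (NNt : ℝ × ℝ → Fin 3 → ℝ)
    (hNNt : ∀ p, NNt p =
      (enorm3 (crossProduct (pu Φt p) (pv Φt p)))⁻¹ • crossProduct (pu Φt p) (pv Φt p))
    (Lct Mct Nct : ℝ × ℝ → ℝ)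
    (hLct : ∀ p, Lct p = pu (pu Φt) p ⬝ᵥ NNt p) (hMct : ∀ p, Mct p = pv (pu Φt) p ⬝ᵥ NNt p)
    (hNct : ∀ p, Nct p = pv (pv Φt) p ⬝ᵥ NNt p)
    (c : ℝ) (hc : c ≠ 0)
    (hcE : ∀ p, Et p = c ^ 2 * E p) (hcF : ∀ p, Ft p = c ^ 2 * F p)
    (hcG : ∀ p, Gt p = c ^ 2 * G p)
    (u v : ℝ → ℝ) (hu : ContDiff ℝ (⊤ : ℕ∞) u) (hv : ContDiff ℝ (⊤ : ℕ∞) v)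
    (σ : ℝ → Fin 3 → ℝ) (hσ : ∀ s, σ s = Φ (u s, v s))
    (hunit : ∀ s, enorm3 (deriv σ s) = 1)
    (κ : ℝ → ℝ) (hκ : ∀ s, κ s = enorm3 (deriv (deriv σ) s)) (hκ0 : ∀ s, κ s ≠ 0)
    (ξ μ : ℝ → ℝ) (hξ : ContDiff ℝ (⊤ : ℕ∞) ξ) (hμ : ContDiff ℝ (⊤ : ℕ∞) μ)
    (hosc : ∀ s, σ s = ξ s • deriv σ s + (μ s / κ s) • deriv (deriv σ) s)
    (σt : ℝ → Fin 3 → ℝ)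
    (hσt : ∀ s, σt s =
      ξ s • (deriv u s • pu Φt (u s, v s) + deriv v s • pv Φt (u s, v s)) +
      (μ s / κ s) •
        (deriv (deriv u) s • pu Φt (u s, v s) + deriv (deriv v) s • pv Φt (u s, v s) +
         (deriv u s) ^ 2 • pu (pu Φt) (u s, v s) +
         (2 * deriv u s * deriv v s) • pv (pu Φt) (u s, v s) +
         (deriv v s) ^ 2 • pv (pv Φt) (u s, v s)))
    (κn κtn : ℝ → ℝ)
    (hκn : ∀ s, κn s =
      Lc (u s, v s) * (deriv u s) ^ 2 + 2 * Mc (u s, v s) * deriv u s * deriv v s +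
        Nc (u s, v s) * (deriv v s) ^ 2)
    (hκtn : ∀ s, κtn s =
      Lct (u s, v s) * (deriv u s) ^ 2 + 2 * Mct (u s, v s) * deriv u s * deriv v s +
        Nct (u s, v s) * (deriv v s) ^ 2)
    (s : ℝ)
    (hcond : μ s = 0 ∨ (κn s = 0 ∧ κtn s = 0) ∨ κtn s = c ^ 2 * κn s) :
    σt s ⬝ᵥ NNt (u s, v s) = c ^ 2 * (σ s ⬝ᵥ NN (u s, v s)) ∧
      (c = 1 → σt s ⬝ᵥ NNt (u s, v s) = σ s ⬝ᵥ NN (u s, v s)) := by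
  set p := (u s, v s) with hp
  have hperp_t_u : pu Φt p ⬝ᵥ NNt p = 0 := by
    rw [hNNt, dotProduct_smul, dot_self_cross, smul_zero]
  have hperp_t_v : pv Φt p ⬝ᵥ NNt p = 0 := by
    rw [hNNt, dotProduct_smul, dot_cross_self, smul_zero]
  have hperp_u : pu Φ p ⬝ᵥ NN p = 0 := by
    rw [hNN, dotProduct_smul, dot_self_cross, smul_zero]
  have hperp_v : pv Φ p ⬝ᵥ NN p = 0 := by
    rw [hNN, dotProduct_smul, dot_cross_self, smul_zero]
  have hσt_dot : σt s ⬝ᵥ NNt p = (μ s / κ s) * κtn s := by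
    rw [hσt s, hκtn s]
    simp only [smul_add, add_dotProduct, smul_dotProduct, smul_eq_mul, ← hp,
      hperp_t_u, hperp_t_v, ← hLct, ← hMct, ← hNct]
    ring
  have hσeq : σ = fun t => Φ (u t, v t) := funext hσ
  have hud : Differentiable ℝ u := hu.differentiable (by simp)
  have hvd : Differentiable ℝ v := hv.differentiable (by simp)
  have hd1 : deriv σ s = deriv u s • pu Φ p + deriv v s • pv Φ p := by
    rw [hσeq]; exact deriv1_comp Φ (hΦ.differentiable (by simp)) u v hud hvd s
  have hd2 : deriv (deriv σ) s =
      deriv (deriv u) s • pu Φ p + deriv (deriv v) s • pv Φ p +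
      (deriv u s) ^ 2 • pu (pu Φ) p +
      (2 * deriv u s * deriv v s) • pv (pu Φ) p +
      (deriv v s) ^ 2 • pv (pv Φ) p := by
    rw [hσeq]; exact deriv2_comp Φ hΦ u v hu hv s
  have hσ_dot : σ s ⬝ᵥ NN p = (μ s / κ s) * κn s := by
    rw [hosc s, hd1, hd2, hκn s]
    simp only [smul_add, add_dotProduct, smul_dotProduct, smul_eq_mul, ← hp,
      hperp_u, hperp_v, ← hLc, ← hMc, ← hNc]
    ring
  have main : σt s ⬝ᵥ NNt p = c ^ 2 * (σ s ⬝ᵥ NN p) := by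
    rw [hσt_dot, hσ_dot]
    rcases hcond with h | ⟨h1, h2⟩ | h
    · rw [h]; ring
    · rw [h1, h2]; ring
    · rw [h]; ring
  exact ⟨main, fun h1 => by rw [main, h1]; ring⟩
end
end

section
/- (Coordinate formula for geodesic curvature, eq. (3.23).) For the unit-speed curve σ(s) = Φ(u(s),v(s)), the geodesic curvature κ_g := σ''·(𝐍 × σ') satisfies κ_g = √(EG − F²)·[Γ²₁₁u'³ + (2Γ²₁₂ − Γ¹₁₁)u'²v' + (Γ²₂₂ − 2Γ¹₁₂)u'v'² − Γ¹₂₂v'³ + u'v'' − u''v'], all quantities attached to Φ evaluated at (u(s),v(s)). -/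
noncomputable section
open Matrix

lemma contDiff_pu_s14 {E : Type*} [NormedAddCommGroup E] [NormedSpace ℝ E]
    {f : ℝ × ℝ → E} (hf : ContDiff ℝ (⊤ : ℕ∞) f) : ContDiff ℝ (⊤ : ℕ∞) (pu f) :=
  (hf.fderiv_right (by simp)).clm_apply contDiff_const

lemma contDiff_pv_s14 {E : Type*} [NormedAddCommGroup E] [NormedSpace ℝ E]
    {f : ℝ × ℝ → E} (hf : ContDiff ℝ (⊤ : ℕ∞) f) : ContDiff ℝ (⊤ : ℕ∞) (pv f) :=
  (hf.fderiv_right (by simp)).clm_apply contDiff_const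

lemma hasDerivAt_comp_curve {E : Type*} [NormedAddCommGroup E] [NormedSpace ℝ E]
    {f : ℝ × ℝ → E} (hf : Differentiable ℝ f) {u v : ℝ → ℝ} (hu : Differentiable ℝ u)
    (hv : Differentiable ℝ v) (s : ℝ) :
    HasDerivAt (fun t => f (u t, v t))
      (deriv u s • pu f (u s, v s) + deriv v s • pv f (u s, v s)) s := by
  have hγ : HasDerivAt (fun t => (u t, v t)) (deriv u s, deriv v s) s :=
    ((hu s).hasDerivAt).prodMk ((hv s).hasDerivAt)
  have hf' : HasFDerivAt f (fderiv ℝ f (u s, v s)) (u s, v s) := (hf _).hasFDerivAt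
  have h := hf'.comp_hasDerivAt s hγ
  convert h using 1
  · rfl
  have hvec : (deriv u s, deriv v s) = deriv u s • ((1:ℝ),(0:ℝ)) + deriv v s • ((0:ℝ),(1:ℝ)) := by
    simp
  rw [hvec, map_add, _root_.map_smul, _root_.map_smul]
  rfl

lemma fderiv_dot {f g : ℝ × ℝ → Fin 3 → ℝ} (hf : Differentiable ℝ f)
    (hg : Differentiable ℝ g) (p : ℝ × ℝ) (w : ℝ × ℝ) :
    fderiv ℝ (fun q => f q ⬝ᵥ g q) p w = fderiv ℝ f p w ⬝ᵥ g p + f p ⬝ᵥ fderiv ℝ g p w := by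
  have hfi : ∀ i : Fin 3, HasFDerivAt (fun q => f q i)
      ((ContinuousLinearMap.proj i).comp (fderiv ℝ f p)) p := fun i =>
    (ContinuousLinearMap.proj (R := ℝ) (φ := fun _ : Fin 3 => ℝ) i).hasFDerivAt.comp p
      (hf p).hasFDerivAt
  have hgi : ∀ i : Fin 3, HasFDerivAt (fun q => g q i)
      ((ContinuousLinearMap.proj i).comp (fderiv ℝ g p)) p := fun i =>
    (ContinuousLinearMap.proj (R := ℝ) (φ := fun _ : Fin 3 => ℝ) i).hasFDerivAt.comp p
      (hg p).hasFDerivAt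
  have hsum : HasFDerivAt (fun q => ∑ i : Fin 3, f q i * g q i)
      (∑ i : Fin 3, (f p i • ((ContinuousLinearMap.proj i).comp (fderiv ℝ g p)) +
        g p i • ((ContinuousLinearMap.proj i).comp (fderiv ℝ f p)))) p :=
    HasFDerivAt.fun_sum fun i _ => (hfi i).mul (hgi i)
  have heq : (fun q => f q ⬝ᵥ g q) = fun q => ∑ i : Fin 3, f q i * g q i := by
    funext q; simp [dotProduct]
  rw [heq, hsum.fderiv]
  simp [dotProduct, Fin.sum_univ_three]
  ring

lemma pv_pu {E : Type*} [NormedAddCommGroup E] [NormedSpace ℝ E]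
    {f : ℝ × ℝ → E} (hf : ContDiff ℝ (⊤ : ℕ∞) f) (p : ℝ × ℝ) : pv (pu f) p = pu (pv f) p := by
  have hsymm : IsSymmSndFDerivAt ℝ f p := hf.contDiffAt.isSymmSndFDerivAt (by rw [minSmoothness_of_isRCLikeNormedField]; exact WithTop.coe_le_coe.mpr (le_top : (2 : ℕ∞) ≤ ⊤))
  have hd : DifferentiableAt ℝ (fderiv ℝ f) p :=
    ((hf.fderiv_right (m := (⊤ : ℕ∞)) (by simp)).differentiable (by simp)) p
  have h1 : ∀ w w' : ℝ × ℝ, fderiv ℝ (fun q => fderiv ℝ f q w) p w' =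
      fderiv ℝ (fderiv ℝ f) p w' w := by
    intro w w'
    have := fderiv_clm_apply (c := fderiv ℝ f) (u := fun _ => w) hd (differentiableAt_const w)
    rw [this]
    simp
  show fderiv ℝ (fun q => fderiv ℝ f q (1,0)) p (0,1) = fderiv ℝ (fun q => fderiv ℝ f q (0,1)) p (1,0)
  rw [h1, h1, hsymm.eq]

lemma cross_cross_expand (a b c : Fin 3 → ℝ) :
    crossProduct (crossProduct a b) c = (a ⬝ᵥ c) • b - (b ⬝ᵥ c) • a := by
  funext i
  fin_cases i <;>
    simp [crossProduct, dotProduct, Fin.sum_univ_three] <;> ring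

lemma smul_cross' (c : ℝ) (a b : Fin 3 → ℝ) :
    crossProduct (c • a) b = c • crossProduct a b := by
  rw [_root_.map_smul]; rfl

lemma cross_smul_right' (c : ℝ) (a b : Fin 3 → ℝ) :
    crossProduct a (c • b) = c • crossProduct a b := (crossProduct a).map_smul c b

lemma cross_add_right' (a b b' : Fin 3 → ℝ) :
    crossProduct a (b + b') = crossProduct a b + crossProduct a b' := (crossProduct a).map_add b b'

theorem geodesic_curvature_coordinate_formula
    (Φ : ℝ × ℝ → Fin 3 → ℝ) (hΦ : ContDiff ℝ (⊤ : ℕ∞) Φ)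
    (hreg : ∀ p, crossProduct (pu Φ p) (pv Φ p) ≠ 0)
    (E F G : ℝ × ℝ → ℝ)
    (hE : ∀ p, E p = pu Φ p ⬝ᵥ pu Φ p) (hF : ∀ p, F p = pu Φ p ⬝ᵥ pv Φ p)
    (hG : ∀ p, G p = pv Φ p ⬝ᵥ pv Φ p)
    (NN : ℝ × ℝ → Fin 3 → ℝ)
    (hNN : ∀ p, NN p =
      (enorm3 (crossProduct (pu Φ p) (pv Φ p)))⁻¹ • crossProduct (pu Φ p) (pv Φ p))
    (hW : ∀ p, 0 < E p * G p - F p ^ 2)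
    (Γ111 Γ211 Γ112 Γ212 Γ122 Γ222 : ℝ × ℝ → ℝ)
    (hΓ111 : ∀ p, Γ111 p =
      (G p * pu E p - 2 * F p * pu F p + F p * pv E p) / (2 * (E p * G p - F p ^ 2)))
    (hΓ211 : ∀ p, Γ211 p =
      (2 * E p * pu F p - E p * pv E p - F p * pu E p) / (2 * (E p * G p - F p ^ 2)))
    (hΓ112 : ∀ p, Γ112 p =
      (G p * pv E p - F p * pu G p) / (2 * (E p * G p - F p ^ 2)))
    (hΓ212 : ∀ p, Γ212 p =
      (E p * pu G p - F p * pv E p) / (2 * (E p * G p - F p ^ 2)))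
    (hΓ122 : ∀ p, Γ122 p =
      (2 * G p * pv F p - G p * pu G p - F p * pv G p) / (2 * (E p * G p - F p ^ 2)))
    (hΓ222 : ∀ p, Γ222 p =
      (E p * pv G p - 2 * F p * pv F p + F p * pu G p) / (2 * (E p * G p - F p ^ 2)))
    (u v : ℝ → ℝ) (hu : ContDiff ℝ (⊤ : ℕ∞) u) (hv : ContDiff ℝ (⊤ : ℕ∞) v)
    (σ : ℝ → Fin 3 → ℝ) (hσ : ∀ s, σ s = Φ (u s, v s))
    (hunit : ∀ s, enorm3 (deriv σ s) = 1) :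
    ∀ s, deriv (deriv σ) s ⬝ᵥ crossProduct (NN (u s, v s)) (deriv σ s) =
      Real.sqrt (E (u s, v s) * G (u s, v s) - F (u s, v s) ^ 2) *
        (Γ211 (u s, v s) * (deriv u s) ^ 3 +
         (2 * Γ212 (u s, v s) - Γ111 (u s, v s)) * (deriv u s) ^ 2 * deriv v s +
         (Γ222 (u s, v s) - 2 * Γ112 (u s, v s)) * deriv u s * (deriv v s) ^ 2 -
         Γ122 (u s, v s) * (deriv v s) ^ 3 +
         deriv u s * deriv (deriv v) s - deriv (deriv u) s * deriv v s) := by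
  intro s
  have hσfun : σ = fun t => Φ (u t, v t) := funext hσ
  subst hσfun
  -- differentiability facts
  have hΦd : Differentiable ℝ Φ := hΦ.differentiable (by simp)
  have hud : Differentiable ℝ u := hu.differentiable (by simp)
  have hvd : Differentiable ℝ v := hv.differentiable (by simp)
  have hPd : Differentiable ℝ (pu Φ) := (contDiff_pu_s14 hΦ).differentiable (by simp)
  have hQd : Differentiable ℝ (pv Φ) := (contDiff_pv_s14 hΦ).differentiable (by simp)
  have hu'd : Differentiable ℝ (deriv u) :=
    ((contDiff_infty_iff_deriv.mp (hu.of_le (by simp))).2).differentiable (by simp)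
  have hv'd : Differentiable ℝ (deriv v) :=
    ((contDiff_infty_iff_deriv.mp (hv.of_le (by simp))).2).differentiable (by simp)
  -- abbreviations (values at the point)
  set Pv := pu Φ (u s, v s) with hPv
  set Qv := pv Φ (u s, v s) with hQv
  set PPv := pu (pu Φ) (u s, v s) with hPPv
  set Av := pv (pu Φ) (u s, v s) with hAv
  set QQv := pv (pv Φ) (u s, v s) with hQQv
  set u1 := deriv u s with hu1
  set v1 := deriv v s with hv1
  set u2 := deriv (deriv u) s with hu2
  set v2 := deriv (deriv v) s with hv2
  -- first derivative of σ
  have hσ' : ∀ t, HasDerivAt (fun t => Φ (u t, v t))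
      (deriv u t • pu Φ (u t, v t) + deriv v t • pv Φ (u t, v t)) t :=
    fun t => hasDerivAt_comp_curve hΦd hud hvd t
  have hderivσ : deriv (fun t => Φ (u t, v t)) =
      fun t => deriv u t • pu Φ (u t, v t) + deriv v t • pv Φ (u t, v t) :=
    funext fun t => (hσ' t).deriv
  have hds : deriv (fun t => Φ (u t, v t)) s = u1 • Pv + v1 • Qv := (hσ' s).deriv
  -- second derivative of σ
  have hsym : pu (pv Φ) (u s, v s) = Av := (pv_pu hΦ _).symm
  have hP' : HasDerivAt (fun t => pu Φ (u t, v t)) (u1 • PPv + v1 • Av) s :=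
    hasDerivAt_comp_curve hPd hud hvd s
  have hQ' : HasDerivAt (fun t => pv Φ (u t, v t)) (u1 • Av + v1 • QQv) s := by
    have := hasDerivAt_comp_curve hQd hud hvd s
    rwa [hsym] at this
  have hS : HasDerivAt (deriv (fun t => Φ (u t, v t)))
      ((u1 • (u1 • PPv + v1 • Av) + u2 • Pv) + (v1 • (u1 • Av + v1 • QQv) + v2 • Qv)) s := by
    rw [hderivσ]
    exact (((hu'd s).hasDerivAt).smul hP').add (((hv'd s).hasDerivAt).smul hQ')
  -- dot product values
  have hd_pp : Pv ⬝ᵥ Pv = E (u s, v s) := (hE _).symm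
  have hd_pq : Pv ⬝ᵥ Qv = F (u s, v s) := (hF _).symm
  have hd_qp : Qv ⬝ᵥ Pv = F (u s, v s) := by rw [dotProduct_comm]; exact (hF _).symm
  have hd_qq : Qv ⬝ᵥ Qv = G (u s, v s) := (hG _).symm
  -- derivatives of E, F, G
  have hEfun : E = fun q => pu Φ q ⬝ᵥ pu Φ q := funext hE
  have hFfun : F = fun q => pu Φ q ⬝ᵥ pv Φ q := funext hF
  have hGfun : G = fun q => pv Φ q ⬝ᵥ pv Φ q := funext hG
  have hEu : pu E (u s, v s) = 2 * (PPv ⬝ᵥ Pv) := by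
    rw [hEfun]
    show fderiv ℝ (fun q => pu Φ q ⬝ᵥ pu Φ q) (u s, v s) (1, 0) = _
    rw [fderiv_dot hPd hPd _ _, dotProduct_comm Pv]
    show PPv ⬝ᵥ Pv + PPv ⬝ᵥ Pv = _
    ring
  have hEv : pv E (u s, v s) = 2 * (Av ⬝ᵥ Pv) := by
    rw [hEfun]
    show fderiv ℝ (fun q => pu Φ q ⬝ᵥ pu Φ q) (u s, v s) (0, 1) = _
    rw [fderiv_dot hPd hPd _ _, dotProduct_comm Pv]
    show Av ⬝ᵥ Pv + Av ⬝ᵥ Pv = _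
    ring
  have hFu : pu F (u s, v s) = PPv ⬝ᵥ Qv + Av ⬝ᵥ Pv := by
    rw [hFfun]
    show fderiv ℝ (fun q => pu Φ q ⬝ᵥ pv Φ q) (u s, v s) (1, 0) = _
    rw [fderiv_dot hPd hQd _ _, dotProduct_comm Pv]
    show PPv ⬝ᵥ Qv + pu (pv Φ) (u s, v s) ⬝ᵥ Pv = _
    rw [hsym]
  have hFv : pv F (u s, v s) = Av ⬝ᵥ Qv + QQv ⬝ᵥ Pv := by
    rw [hFfun]
    show fderiv ℝ (fun q => pu Φ q ⬝ᵥ pv Φ q) (u s, v s) (0, 1) = _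
    rw [fderiv_dot hPd hQd _ _, dotProduct_comm Pv]
    rfl
  have hGu : pu G (u s, v s) = 2 * (Av ⬝ᵥ Qv) := by
    rw [hGfun]
    show fderiv ℝ (fun q => pv Φ q ⬝ᵥ pv Φ q) (u s, v s) (1, 0) = _
    rw [fderiv_dot hQd hQd _ _, dotProduct_comm Qv]
    show pu (pv Φ) (u s, v s) ⬝ᵥ Qv + pu (pv Φ) (u s, v s) ⬝ᵥ Qv = _
    rw [hsym]; ring
  have hGv : pv G (u s, v s) = 2 * (QQv ⬝ᵥ Qv) := by
    rw [hGfun]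
    show fderiv ℝ (fun q => pv Φ q ⬝ᵥ pv Φ q) (u s, v s) (0, 1) = _
    rw [fderiv_dot hQd hQd _ _, dotProduct_comm Qv]
    show QQv ⬝ᵥ Qv + QQv ⬝ᵥ Qv = _
    ring
  -- the normal and W
  have hLag : (crossProduct Pv Qv) ⬝ᵥ (crossProduct Pv Qv)
      = E (u s, v s) * G (u s, v s) - F (u s, v s) ^ 2 := by
    rw [cross_dot_cross, dotProduct_comm Qv Pv, hd_pp, hd_pq, hd_qq]; ring
  set W := Real.sqrt (E (u s, v s) * G (u s, v s) - F (u s, v s) ^ 2) with hWdef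
  have hW0 : enorm3 (crossProduct Pv Qv) = W := by rw [enorm3, hLag]
  have hWpos : 0 < W := Real.sqrt_pos.mpr (hW _)
  have hWne : W ≠ 0 := hWpos.ne'
  have hWW : W * W = E (u s, v s) * G (u s, v s) - F (u s, v s) ^ 2 :=
    Real.mul_self_sqrt (hW (u s, v s)).le
  have hN : NN (u s, v s) = W⁻¹ • crossProduct Pv Qv := by rw [hNN, hW0]
  -- the cross product N × σ'
  have hcross : crossProduct (NN (u s, v s)) (deriv (fun t => Φ (u t, v t)) s)
      = W⁻¹ • ((u1 * E (u s, v s) + v1 * F (u s, v s)) • Qv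
          - (u1 * F (u s, v s) + v1 * G (u s, v s)) • Pv) := by
    rw [hds, hN, smul_cross', cross_add_right', cross_smul_right', cross_smul_right',
      cross_cross_expand, cross_cross_expand, hd_pp, hd_pq, hd_qp, hd_qq]
    module
  -- expand the two dot products with σ''
  have hSQ : ((u1 • (u1 • PPv + v1 • Av) + u2 • Pv) + (v1 • (u1 • Av + v1 • QQv) + v2 • Qv)) ⬝ᵥ Qv
      = u1 * (u1 * (PPv ⬝ᵥ Qv) + v1 * (Av ⬝ᵥ Qv)) + u2 * F (u s, v s)
        + (v1 * (u1 * (Av ⬝ᵥ Qv) + v1 * (QQv ⬝ᵥ Qv)) + v2 * G (u s, v s)) := by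
    simp [add_dotProduct, smul_dotProduct, hd_pq, hd_qq, mul_add]
  have hSP : ((u1 • (u1 • PPv + v1 • Av) + u2 • Pv) + (v1 • (u1 • Av + v1 • QQv) + v2 • Qv)) ⬝ᵥ Pv
      = u1 * (u1 * (PPv ⬝ᵥ Pv) + v1 * (Av ⬝ᵥ Pv)) + u2 * E (u s, v s)
        + (v1 * (u1 * (Av ⬝ᵥ Pv) + v1 * (QQv ⬝ᵥ Pv)) + v2 * F (u s, v s)) := by
    simp [add_dotProduct, smul_dotProduct, hd_pp, hd_qp, mul_add]
  -- assemble
  rw [hS.deriv, hcross, dotProduct_smul, smul_eq_mul, dotProduct_sub, dotProduct_smul,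
    dotProduct_smul, smul_eq_mul, smul_eq_mul, hSQ, hSP,
    hΓ211 (u s, v s), hΓ212 (u s, v s), hΓ111 (u s, v s), hΓ222 (u s, v s),
    hΓ112 (u s, v s), hΓ122 (u s, v s), hEu, hEv, hFu, hFv, hGu, hGv]
  rw [inv_mul_eq_iff_eq_mul₀ hWne, ← mul_assoc, hWW]
  have h2 : E (u s, v s) * G (u s, v s) - F (u s, v s) ^ 2 ≠ 0 := (hW _).ne'
  field_simp
  ring
end
end

section
/- (Theorem 3.11: geodesic curvature under a conformal map.) Let Φ and Φ̃ be conformally related with dilation factor δ, and let u, v : ℝ → ℝ be smooth. Define κ_g = √(EG − F²)·[Γ²₁₁u'³ + (2Γ²₁₂ − Γ¹₁₁)u'²v' + (Γ²₂₂ − 2Γ¹₁₂)u'v'² − Γ¹₂₂v'³ + u'v'' − u''v'] and κ̃_g by the same formula with all tilde quantities (Ẽ, F̃, G̃, Γ̃ⁱⱼₖ). Then κ̃_g = δ²κ_g + δ²√(EG − F²)·[ϑ²₁₁u'³ + (2ϑ²₁₂ − ϑ¹₁₁)u'²v' + (ϑ²₂₂ − 2ϑ¹₁₂)u'v'² − ϑ¹₂₂v'³],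 all quantities on ℝ² evaluated at (u(s),v(s)). -/
noncomputable section
open Matrix

lemma contDiff_pu3 (Φ : ℝ × ℝ → Fin 3 → ℝ) (hΦ : ContDiff ℝ (⊤ : ℕ∞) Φ) :
    ContDiff ℝ (⊤ : ℕ∞) (fun p => pu Φ p) := by
  unfold pu
  exact (hΦ.fderiv_right (by simp)).clm_apply contDiff_const

lemma contDiff_pv3 (Φ : ℝ × ℝ → Fin 3 → ℝ) (hΦ : ContDiff ℝ (⊤ : ℕ∞) Φ) :
    ContDiff ℝ (⊤ : ℕ∞) (fun p => pv Φ p) := by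
  unfold pv
  exact (hΦ.fderiv_right (by simp)).clm_apply contDiff_const

lemma contDiff_dot (X Y : ℝ × ℝ → Fin 3 → ℝ) (hX : ContDiff ℝ (⊤ : ℕ∞) X) (hY : ContDiff ℝ (⊤ : ℕ∞) Y) :
    ContDiff ℝ (⊤ : ℕ∞) (fun p => X p ⬝ᵥ Y p) := by
  simp only [dotProduct]
  exact ContDiff.sum fun i _ => (contDiff_pi.mp hX i).mul (contDiff_pi.mp hY i)

lemma pu_mul (f g : ℝ × ℝ → ℝ) (p : ℝ × ℝ) (hf : DifferentiableAt ℝ f p)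
    (hg : DifferentiableAt ℝ g p) :
    pu (fun q => f q * g q) p = pu f p * g p + f p * pu g p := by
  unfold pu
  rw [fderiv_fun_mul hf hg]
  simp
  ring

lemma pv_mul (f g : ℝ × ℝ → ℝ) (p : ℝ × ℝ) (hf : DifferentiableAt ℝ f p)
    (hg : DifferentiableAt ℝ g p) :
    pv (fun q => f q * g q) p = pv f p * g p + f p * pv g p := by
  unfold pv
  rw [fderiv_fun_mul hf hg]
  simp
  ring

lemma pu_conf (δ f : ℝ × ℝ → ℝ) (p : ℝ × ℝ) (hδ : DifferentiableAt ℝ δ p)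
    (hf : DifferentiableAt ℝ f p) :
    pu (fun q => δ q ^ 2 * f q) p = 2 * δ p * pu δ p * f p + δ p ^ 2 * pu f p := by
  have h1 : pu (fun q => (δ q * δ q) * f q) p
      = pu (fun q => δ q * δ q) p * f p + (δ p * δ p) * pu f p :=
    pu_mul (fun q => δ q * δ q) f p (hδ.mul hδ) hf
  have h2 : pu (fun q => δ q * δ q) p = pu δ p * δ p + δ p * pu δ p := pu_mul δ δ p hδ hδ
  simp only [pow_two]
  rw [h1, h2]; ring

lemma pv_conf (δ f : ℝ × ℝ → ℝ) (p : ℝ × ℝ) (hδ : DifferentiableAt ℝ δ p)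
    (hf : DifferentiableAt ℝ f p) :
    pv (fun q => δ q ^ 2 * f q) p = 2 * δ p * pv δ p * f p + δ p ^ 2 * pv f p := by
  have h1 : pv (fun q => (δ q * δ q) * f q) p
      = pv (fun q => δ q * δ q) p * f p + (δ p * δ p) * pv f p :=
    pv_mul (fun q => δ q * δ q) f p (hδ.mul hδ) hf
  have h2 : pv (fun q => δ q * δ q) p = pv δ p * δ p + δ p * pv δ p := pv_mul δ δ p hδ hδ
  simp only [pow_two]
  rw [h1, h2]; ring

theorem geodesic_curvature_under_conformal_map
    (Φ : ℝ × ℝ → Fin 3 → ℝ) (hΦ : ContDiff ℝ (⊤ : ℕ∞) Φ)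
    (E F G : ℝ × ℝ → ℝ)
    (hE : ∀ p, E p = pu Φ p ⬝ᵥ pu Φ p) (hF : ∀ p, F p = pu Φ p ⬝ᵥ pv Φ p)
    (hG : ∀ p, G p = pv Φ p ⬝ᵥ pv Φ p)
    (hW : ∀ p, 0 < E p * G p - F p ^ 2)
    (Γ111 Γ211 Γ112 Γ212 Γ122 Γ222 : ℝ × ℝ → ℝ)
    (hΓ111 : ∀ p, Γ111 p =
      (G p * pu E p - 2 * F p * pu F p + F p * pv E p) / (2 * (E p * G p - F p ^ 2)))
    (hΓ211 : ∀ p, Γ211 p =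
      (2 * E p * pu F p - E p * pv E p - F p * pu E p) / (2 * (E p * G p - F p ^ 2)))
    (hΓ112 : ∀ p, Γ112 p =
      (G p * pv E p - F p * pu G p) / (2 * (E p * G p - F p ^ 2)))
    (hΓ212 : ∀ p, Γ212 p =
      (E p * pu G p - F p * pv E p) / (2 * (E p * G p - F p ^ 2)))
    (hΓ122 : ∀ p, Γ122 p =
      (2 * G p * pv F p - G p * pu G p - F p * pv G p) / (2 * (E p * G p - F p ^ 2)))
    (hΓ222 : ∀ p, Γ222 p =
      (E p * pv G p - 2 * F p * pv F p + F p * pu G p) / (2 * (E p * G p - F p ^ 2)))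
    (Φt : ℝ × ℝ → Fin 3 → ℝ) (hΦt : ContDiff ℝ (⊤ : ℕ∞) Φt)
    (Et Ft Gt : ℝ × ℝ → ℝ)
    (hEt : ∀ p, Et p = pu Φt p ⬝ᵥ pu Φt p) (hFt : ∀ p, Ft p = pu Φt p ⬝ᵥ pv Φt p)
    (hGt : ∀ p, Gt p = pv Φt p ⬝ᵥ pv Φt p)
    (Γt111 Γt211 Γt112 Γt212 Γt122 Γt222 : ℝ × ℝ → ℝ)
    (hΓt111 : ∀ p, Γt111 p =
      (Gt p * pu Et p - 2 * Ft p * pu Ft p + Ft p * pv Et p) / (2 * (Et p * Gt p - Ft p ^ 2)))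
    (hΓt211 : ∀ p, Γt211 p =
      (2 * Et p * pu Ft p - Et p * pv Et p - Ft p * pu Et p) / (2 * (Et p * Gt p - Ft p ^ 2)))
    (hΓt112 : ∀ p, Γt112 p =
      (Gt p * pv Et p - Ft p * pu Gt p) / (2 * (Et p * Gt p - Ft p ^ 2)))
    (hΓt212 : ∀ p, Γt212 p =
      (Et p * pu Gt p - Ft p * pv Et p) / (2 * (Et p * Gt p - Ft p ^ 2)))
    (hΓt122 : ∀ p, Γt122 p =
      (2 * Gt p * pv Ft p - Gt p * pu Gt p - Ft p * pv Gt p) / (2 * (Et p * Gt p - Ft p ^ 2)))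
    (hΓt222 : ∀ p, Γt222 p =
      (Et p * pv Gt p - 2 * Ft p * pv Ft p + Ft p * pu Gt p) / (2 * (Et p * Gt p - Ft p ^ 2)))
    (δ : ℝ × ℝ → ℝ) (hδ : ContDiff ℝ (⊤ : ℕ∞) δ) (hδpos : ∀ p, 0 < δ p)
    (hcE : ∀ p, Et p = δ p ^ 2 * E p) (hcF : ∀ p, Ft p = δ p ^ 2 * F p)
    (hcG : ∀ p, Gt p = δ p ^ 2 * G p)
    (ϑ111 ϑ211 ϑ112 ϑ212 ϑ122 ϑ222 : ℝ × ℝ → ℝ)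
    (hϑ111 : ∀ p, ϑ111 p =
      (E p * G p * pu δ p - 2 * F p ^ 2 * pu δ p + E p * F p * pv δ p) / (δ p * (E p * G p - F p ^ 2)))
    (hϑ211 : ∀ p, ϑ211 p = (E p * F p * pu δ p - E p ^ 2 * pv δ p) / (δ p * (E p * G p - F p ^ 2)))
    (hϑ112 : ∀ p, ϑ112 p = (E p * G p * pv δ p - F p * G p * pu δ p) / (δ p * (E p * G p - F p ^ 2)))
    (hϑ212 : ∀ p, ϑ212 p = (E p * G p * pu δ p - E p * F p * pv δ p) / (δ p * (E p * G p - F p ^ 2)))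
    (hϑ122 : ∀ p, ϑ122 p = (F p * G p * pv δ p - G p ^ 2 * pu δ p) / (δ p * (E p * G p - F p ^ 2)))
    (hϑ222 : ∀ p, ϑ222 p =
      (E p * G p * pv δ p - 2 * F p ^ 2 * pv δ p + F p * G p * pu δ p) / (δ p * (E p * G p - F p ^ 2)))
    (u v : ℝ → ℝ) (hu : ContDiff ℝ (⊤ : ℕ∞) u) (hv : ContDiff ℝ (⊤ : ℕ∞) v)
    (κg : ℝ → ℝ)
    (hκg : ∀ s, κg s =
      Real.sqrt (E (u s, v s) * G (u s, v s) - F (u s, v s) ^ 2) *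
        (Γ211 (u s, v s) * (deriv u s) ^ 3 +
         (2 * Γ212 (u s, v s) - Γ111 (u s, v s)) * (deriv u s) ^ 2 * deriv v s +
         (Γ222 (u s, v s) - 2 * Γ112 (u s, v s)) * deriv u s * (deriv v s) ^ 2 -
         Γ122 (u s, v s) * (deriv v s) ^ 3 +
         deriv u s * deriv (deriv v) s - deriv (deriv u) s * deriv v s))
    (κtg : ℝ → ℝ)
    (hκtg : ∀ s, κtg s =
      Real.sqrt (Et (u s, v s) * Gt (u s, v s) - Ft (u s, v s) ^ 2) *
        (Γt211 (u s, v s) * (deriv u s) ^ 3 +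
         (2 * Γt212 (u s, v s) - Γt111 (u s, v s)) * (deriv u s) ^ 2 * deriv v s +
         (Γt222 (u s, v s) - 2 * Γt112 (u s, v s)) * deriv u s * (deriv v s) ^ 2 -
         Γt122 (u s, v s) * (deriv v s) ^ 3 +
         deriv u s * deriv (deriv v) s - deriv (deriv u) s * deriv v s))
    :
    ∀ s, κtg s = δ (u s, v s) ^ 2 * κg s +
      δ (u s, v s) ^ 2 *
        Real.sqrt (E (u s, v s) * G (u s, v s) - F (u s, v s) ^ 2) *
        (ϑ211 (u s, v s) * (deriv u s) ^ 3 +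
         (2 * ϑ212 (u s, v s) - ϑ111 (u s, v s)) * (deriv u s) ^ 2 * deriv v s +
         (ϑ222 (u s, v s) - 2 * ϑ112 (u s, v s)) * deriv u s * (deriv v s) ^ 2 -
         ϑ122 (u s, v s) * (deriv v s) ^ 3) := by
  intro s
  set p : ℝ × ℝ := (u s, v s) with hp
  -- smoothness of E, F, G
  have hEeq : E = fun q => pu Φ q ⬝ᵥ pu Φ q := funext hE
  have hFeq : F = fun q => pu Φ q ⬝ᵥ pv Φ q := funext hF
  have hGeq : G = fun q => pv Φ q ⬝ᵥ pv Φ q := funext hG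
  have hEc : ContDiff ℝ (⊤ : ℕ∞) E := by
    rw [hEeq]; exact contDiff_dot _ _ (contDiff_pu3 Φ hΦ) (contDiff_pu3 Φ hΦ)
  have hFc : ContDiff ℝ (⊤ : ℕ∞) F := by
    rw [hFeq]; exact contDiff_dot _ _ (contDiff_pu3 Φ hΦ) (contDiff_pv3 Φ hΦ)
  have hGc : ContDiff ℝ (⊤ : ℕ∞) G := by
    rw [hGeq]; exact contDiff_dot _ _ (contDiff_pv3 Φ hΦ) (contDiff_pv3 Φ hΦ)
  have hδd : DifferentiableAt ℝ δ p := (hδ.differentiable (by simp)) p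
  have hEd : DifferentiableAt ℝ E p := (hEc.differentiable (by simp)) p
  have hFd : DifferentiableAt ℝ F p := (hFc.differentiable (by simp)) p
  have hGd : DifferentiableAt ℝ G p := (hGc.differentiable (by simp)) p
  -- rewrite the tilde coefficients
  have hEteq : Et = fun q => δ q ^ 2 * E q := funext hcE
  have hFteq : Ft = fun q => δ q ^ 2 * F q := funext hcF
  have hGteq : Gt = fun q => δ q ^ 2 * G q := funext hcG
  have hpuEt : pu Et p = 2 * δ p * pu δ p * E p + δ p ^ 2 * pu E p := by
    rw [hEteq]; exact pu_conf δ E p hδd hEd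
  have hpvEt : pv Et p = 2 * δ p * pv δ p * E p + δ p ^ 2 * pv E p := by
    rw [hEteq]; exact pv_conf δ E p hδd hEd
  have hpuFt : pu Ft p = 2 * δ p * pu δ p * F p + δ p ^ 2 * pu F p := by
    rw [hFteq]; exact pu_conf δ F p hδd hFd
  have hpvFt : pv Ft p = 2 * δ p * pv δ p * F p + δ p ^ 2 * pv F p := by
    rw [hFteq]; exact pv_conf δ F p hδd hFd
  have hpuGt : pu Gt p = 2 * δ p * pu δ p * G p + δ p ^ 2 * pu G p := by
    rw [hGteq]; exact pu_conf δ G p hδd hGd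
  have hpvGt : pv Gt p = 2 * δ p * pv δ p * G p + δ p ^ 2 * pv G p := by
    rw [hGteq]; exact pv_conf δ G p hδd hGd
  have hWne : E p * G p - F p ^ 2 ≠ 0 := (hW p).ne'
  have hδne : δ p ≠ 0 := (hδpos p).ne'
  have hden : δ p ^ 2 * E p * (δ p ^ 2 * G p) - (δ p ^ 2 * F p) ^ 2 ≠ 0 := by
    have h : δ p ^ 2 * E p * (δ p ^ 2 * G p) - (δ p ^ 2 * F p) ^ 2
        = δ p ^ 4 * (E p * G p - F p ^ 2) := by ring
    rw [h]
    exact mul_ne_zero (pow_ne_zero 4 hδne) hWne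
  have hC111 : Γt111 p = Γ111 p + ϑ111 p := by
    rw [hΓt111, hΓ111, hϑ111, hcE p, hcF p, hcG p, hpuEt, hpuFt, hpvEt]
    field_simp
    ring
  have hC211 : Γt211 p = Γ211 p + ϑ211 p := by
    rw [hΓt211, hΓ211, hϑ211, hcE p, hcF p, hpuFt, hpvEt, hpuEt, hcG p]
    field_simp
    ring
  have hC112 : Γt112 p = Γ112 p + ϑ112 p := by
    rw [hΓt112, hΓ112, hϑ112, hcE p, hcF p, hcG p, hpvEt, hpuGt]
    field_simp
    ring
  have hC212 : Γt212 p = Γ212 p + ϑ212 p := by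
    rw [hΓt212, hΓ212, hϑ212, hcE p, hcF p, hcG p, hpuGt, hpvEt]
    field_simp
    ring
  have hC122 : Γt122 p = Γ122 p + ϑ122 p := by
    rw [hΓt122, hΓ122, hϑ122, hcE p, hcF p, hcG p, hpvFt, hpuGt, hpvGt]
    field_simp
    ring
  have hC222 : Γt222 p = Γ222 p + ϑ222 p := by
    rw [hΓt222, hΓ222, hϑ222, hcE p, hcF p, hcG p, hpvGt, hpvFt, hpuGt]
    field_simp
    ring
  have hsq : Real.sqrt (Et p * Gt p - Ft p ^ 2)
      = δ p ^ 2 * Real.sqrt (E p * G p - F p ^ 2) := by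
    rw [hcE p, hcF p, hcG p,
      show δ p ^ 2 * E p * (δ p ^ 2 * G p) - (δ p ^ 2 * F p) ^ 2
        = (δ p ^ 2) ^ 2 * (E p * G p - F p ^ 2) by ring,
      Real.sqrt_mul (by positivity), Real.sqrt_sq (by positivity)]
  rw [hκtg s, hκg s, ← hp, hsq, hC111, hC211, hC112, hC212, hC122, hC222]
  ring
end
end
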